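/- arXiv:2111.01782 — 7 statements merged into one kernel-verified Lean document; each statement's English description precedes it below -/
import Mathlib

section
/- Let y* ∈ S(A,x*) where S denotes the spindle. Then S(A,y*) ⊆ S(A,x*). -/
/-!
Row by row, `y ∈ S(A, x*)` says exactly that `aᵢᵀy` lies in the segment between `0` and `aᵢᵀx*`.
The spindle is thus an intersection of preimages of such segments, and the claim reduces to
`[0, b] ⊆ [0, a]` whenever `b ∈ [0, a]`.
-/

open Matrix

/-- The sign cone `C(A, x*)` of a point `x*` with respect to a matrix `A`. -/
def coneC {m n : ℕ} (A : Matrix (Fin m) (Fin n) ℝ) (xs : Fin n → ℝ) : Set (Fin n → ℝ) :=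
  {x | ∀ i, (A.mulVec xs i ≠ 0 → 0 ≤ Real.sign (A.mulVec xs i) * A.mulVec x i) ∧
            (A.mulVec xs i = 0 → A.mulVec x i = 0)}

/-- The spindle `S(A, x*) = C(A, x*) ∩ (x* − C(A, x*))`. -/
def spindleS {m n : ℕ} (A : Matrix (Fin m) (Fin n) ℝ) (xs : Fin n → ℝ) : Set (Fin n → ℝ) :=
  coneC A xs ∩ {x | xs - x ∈ coneC A xs}

def SignCompatible (a b : ℝ) : Prop :=
  (a ≠ 0 → 0 ≤ Real.sign a * b) ∧ (a = 0 → b = 0)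

theorem signCompatible_and_signCompatible_sub_iff (a b : ℝ) :
    SignCompatible a b ∧ SignCompatible a (a - b) ↔ b ∈ Set.uIcc 0 a := by
  rcases lt_trichotomy a 0 with ha | rfl | ha
  · simp only [SignCompatible, Real.sign_of_neg ha, ha.ne, Set.uIcc_of_ge ha.le, Set.mem_Icc,
      ne_eq, not_false_eq_true, forall_const, IsEmpty.forall_iff, and_true, neg_one_mul]
    constructor <;> rintro ⟨h₁, h₂⟩ <;> constructor <;> linarith
  · simp [SignCompatible]
  · simp only [SignCompatible, Real.sign_of_pos ha, ha.ne', Set.uIcc_of_le ha.le, Set.mem_Icc,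
      ne_eq, not_false_eq_true, forall_const, IsEmpty.forall_iff, and_true, one_mul]
    constructor <;> rintro ⟨h₁, h₂⟩ <;> constructor <;> linarith

section Spindle

variable {m n : ℕ} (A : Matrix (Fin m) (Fin n) ℝ)

theorem mem_coneC_iff {xs x : Fin n → ℝ} :
    x ∈ coneC A xs ↔ ∀ i, SignCompatible ((A *ᵥ xs) i) ((A *ᵥ x) i) :=
  Iff.rfl

theorem mem_spindleS_iff {xs x : Fin n → ℝ} :
    x ∈ spindleS A xs ↔ ∀ i, (A *ᵥ x) i ∈ Set.uIcc 0 ((A *ᵥ xs) i) := by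
  simp only [spindleS, Set.mem_inter_iff, mem_coneC_iff, Set.mem_ofPred_eq, mulVec_sub,
    Pi.sub_apply, ← forall_and, signCompatible_and_signCompatible_sub_iff]

theorem spindleS_subset_of_mem {xs ys : Fin n → ℝ} (hys : ys ∈ spindleS A xs) :
    spindleS A ys ⊆ spindleS A xs := by
  intro z hz
  rw [mem_spindleS_iff] at hys hz ⊢
  exact fun i => Set.uIcc_subset_uIcc Set.left_mem_uIcc (hys i) (hz i)

end Spindle

theorem stmt1 {m n : ℕ} (A : Matrix (Fin m) (Fin n) ℤ)
    (xs ys : Fin n → ℝ)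
    (hys : ys ∈ spindleS (A.map (Int.cast : ℤ → ℝ)) xs) :
    spindleS (A.map (Int.cast : ℤ → ℝ)) ys ⊆ spindleS (A.map (Int.cast : ℤ → ℝ)) xs :=
  spindleS_subset_of_mem _ hys
end

section
/- Let A ∈ ℤ^{m×n} and b ∈ ℤ^m with P(A,b) ∩ ℤⁿ = {0}, and let α ∈ ℤⁿ be nonzero. Assume the rows of A positively span ℝⁿ (so P_α := {x ∈ ℝⁿ : |Ax| ≤ 1 componentwise, αᵀx = 0} is a bounded (n−1)-dimensional polytope). Let x* maximize αᵀx over P(A,b) and assume αᵀx* > 0. Then the n-dimensional volume of Q(x*) := P_α + [−x*, x*] satisfies vol_n(Q(x*)) < 2ⁿ. -/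
open Matrix MeasureTheory
open scoped Pointwise

private lemma aux_det (n' : ℕ) (θ c' : ℝ) (xs αr : Fin (n'+1) → ℝ) (hθ0 : 0 < θ) :
    (θ • (1 : Matrix (Fin (n'+1)) (Fin (n'+1)) ℝ) + Matrix.of (fun i j => c' * xs i * αr j)).det
      = θ ^ n' * (θ + c' * ∑ j, αr j * xs j) := by
  have h1 : (θ • (1 : Matrix (Fin (n'+1)) (Fin (n'+1)) ℝ) + Matrix.of (fun i j => c' * xs i * αr j))
      = θ • ((1 : Matrix (Fin (n'+1)) (Fin (n'+1)) ℝ) +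
        Matrix.replicateCol Unit ((c'/θ) • xs) * Matrix.replicateRow Unit αr) := by
    ext i j
    simp only [Matrix.add_apply, Matrix.smul_apply, Matrix.of_apply, smul_eq_mul,
      Matrix.mul_apply, Matrix.replicateCol_apply, Matrix.replicateRow_apply, Pi.smul_apply,
      Finset.univ_unique, Finset.sum_const, Finset.card_singleton, one_smul]
    rw [mul_add]
    congr 1
    field_simp
  rw [h1, Matrix.det_smul, Matrix.det_one_add_replicateCol_mul_replicateRow, Fintype.card_fin]
  have hdot : αr ⬝ᵥ ((c'/θ) • xs) = (c'/θ) * ∑ j, αr j * xs j := by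
    simp only [dotProduct, Pi.smul_apply, smul_eq_mul]
    rw [Finset.mul_sum]
    exact Finset.sum_congr rfl fun j _ => by ring
  rw [hdot, pow_succ]
  field_simp

private lemma aux_apply {n : ℕ} (θ c' : ℝ) (xs αr : Fin n → ℝ) (v : Fin n → ℝ) :
    Matrix.toLin' (θ • (1 : Matrix (Fin n) (Fin n) ℝ) + Matrix.of (fun i j => c' * xs i * αr j)) v
      = θ • v + (c' * ∑ j, αr j * v j) • xs := by
  ext i
  simp only [Matrix.toLin'_apply, Matrix.mulVec, dotProduct, Matrix.add_apply,
    Matrix.smul_apply, Matrix.one_apply, Matrix.of_apply, Pi.add_apply, Pi.smul_apply,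
    smul_eq_mul, add_mul, Finset.sum_add_distrib, mul_ite, mul_one, mul_zero, ite_mul, zero_mul]
  rw [Finset.sum_ite_eq Finset.univ i (fun x => θ * v x)]
  simp only [Finset.mem_univ, if_true]
  congr 1
  rw [Finset.mul_sum, Finset.sum_mul]
  exact Finset.sum_congr rfl fun j _ => by ring

private lemma aux_conv {m n : ℕ} (B : Matrix (Fin m) (Fin n) ℝ) (v : Fin n → ℝ) :
    Convex ℝ {x : Fin n → ℝ | (∀ i, |(B *ᵥ x) i| ≤ 1) ∧ ∑ i, v i * x i = 0} := by
  intro x hx y hy u w hu hw huw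
  obtain ⟨hx1, hx2⟩ := hx
  obtain ⟨hy1, hy2⟩ := hy
  constructor
  · intro i
    have hAuv : (B *ᵥ (u • x + w • y)) i = u * (B *ᵥ x) i + w * (B *ᵥ y) i := by
      rw [Matrix.mulVec_add, Matrix.mulVec_smul, Matrix.mulVec_smul]
      simp
    rw [hAuv]
    calc |u * (B *ᵥ x) i + w * (B *ᵥ y) i|
        ≤ |u * (B *ᵥ x) i| + |w * (B *ᵥ y) i| := abs_add_le _ _
    _ = u * |(B *ᵥ x) i| + w * |(B *ᵥ y) i| := by
        rw [abs_mul, abs_mul, abs_of_nonneg hu, abs_of_nonneg hw]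
    _ ≤ u * 1 + w * 1 := by
        gcongr
        · exact hx1 i
        · exact hy1 i
    _ = 1 := by linarith
  · simp only [Pi.add_apply, Pi.smul_apply, smul_eq_mul, mul_add]
    rw [Finset.sum_add_distrib]
    have e1 : ∑ i, v i * (u * x i) = u * ∑ i, v i * x i := by
      rw [Finset.mul_sum]; exact Finset.sum_congr rfl fun i _ => by ring
    have e2 : ∑ i, v i * (w * y i) = w * ∑ i, v i * y i := by
      rw [Finset.mul_sum]; exact Finset.sum_congr rfl fun i _ => by ring
    rw [e1, e2, hx2, hy2]
    ring

set_option maxHeartbeats 1000000 in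
theorem stmt4 {m n : ℕ} (A : Matrix (Fin m) (Fin n) ℤ) (b : Fin m → ℤ)
    (α : Fin n → ℤ) (hα : α ≠ 0)
    (P : Set (Fin n → ℝ))
    (hP : P = {x | ∀ i, (A.map (Int.cast : ℤ → ℝ)).mulVec x i ≤ (b i : ℝ)})
    (hzero : (0 : Fin n → ℝ) ∈ P)
    (hint : ∀ x ∈ P, (∀ i, ∃ z : ℤ, x i = (z : ℝ)) → x = 0)
    -- the rows of `A` positively span `ℝⁿ`
    (hspan : ∀ v : Fin n → ℝ, ∃ c : Fin m → ℝ, (∀ i, 0 ≤ c i) ∧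
      v = ∑ i, c i • (fun j => ((A i j : ℝ))))
    (Pα : Set (Fin n → ℝ))
    (hPα : Pα = {x | (∀ i, |(A.map (Int.cast : ℤ → ℝ)).mulVec x i| ≤ 1) ∧
      ∑ i, (α i : ℝ) * x i = 0})
    (xs : Fin n → ℝ) (hxsP : xs ∈ P)
    (hmax : ∀ x ∈ P, ∑ i, (α i : ℝ) * x i ≤ ∑ i, (α i : ℝ) * xs i)
    (hpos : 0 < ∑ i, (α i : ℝ) * xs i) :
    volume (Pα + segment ℝ (-xs) xs) < (2 : ENNReal) ^ n := by
  classical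
  by_contra hcon
  push_neg at hcon
  have hn : 0 < n := by
    by_contra hn0
    push_neg at hn0
    interval_cases n
    · simp at hpos
  obtain ⟨n', rfl⟩ : ∃ n', n = n' + 1 := ⟨n - 1, (Nat.succ_pred_eq_of_pos hn).symm⟩
  set Ar := A.map (Int.cast : ℤ → ℝ) with hAr
  set c := ∑ i, (α i : ℝ) * xs i with hc
  -- choose l
  have hfloor : c < (⌊c⌋ : ℝ) + 1 := Int.lt_floor_add_one c
  have hfloor' : (⌊c⌋ : ℝ) ≤ c := Int.floor_le c
  set l : ℝ := ((⌊c⌋ : ℝ) + 1 + c) / (2 * c) with hl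
  have hl1 : 1 < l := by
    rw [hl, lt_div_iff₀ (by positivity)]
    linarith
  have hl0 : 0 < l := by linarith
  have hlc : l * c = ((⌊c⌋ : ℝ) + 1 + c) / 2 := by
    rw [hl]; field_simp
  have hlc' : l * c < (⌊c⌋ : ℝ) + 1 := by rw [hlc]; linarith
  -- choose θ
  set N : ℝ := ((n' + 1 : ℕ) : ℝ) with hN
  have hN1 : 1 ≤ N := by rw [hN]; exact_mod_cast Nat.one_le_iff_ne_zero.mpr (Nat.succ_ne_zero n')
  have hN0 : 0 < N := by linarith
  set a : ℝ := (l - 1) / (2 * N * l) with ha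
  have ha0 : 0 < a := div_pos (by linarith) (by positivity)
  have hNal : N * a * l = (l - 1) / 2 := by
    rw [ha]; field_simp
  have haN : a ≤ N * a := le_mul_of_one_le_left ha0.le hN1
  have ha1 : a < 1 := by nlinarith
  set θ : ℝ := 1 - a with hθ
  have hθ0 : 0 < θ := by linarith
  have hθ1 : θ < 1 := by linarith
  have hbern : 1 - (N - 1) * a ≤ θ ^ n' := by
    have h := one_add_mul_le_pow (a := -a) (by linarith) n'
    have hcast : ((n' : ℕ) : ℝ) = N - 1 := by
      rw [hN]
      push_cast
      ring
    rw [hcast] at h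
    calc 1 - (N - 1) * a = 1 + (N - 1) * (-a) := by ring
    _ ≤ (1 + -a) ^ n' := h
    _ = θ ^ n' := by rw [hθ]; ring_nf
  have hθn'0 : 0 < θ ^ n' := pow_pos hθ0 n'
  have hd1 : 1 < θ ^ n' * l := by
    have h2 : (1 - (N - 1) * a) * l ≤ θ ^ n' * l :=
      mul_le_mul_of_nonneg_right hbern hl0.le
    nlinarith
  -- the shear map
  set αr : Fin (n' + 1) → ℝ := fun j => (α j : ℝ) with hαr
  set c' : ℝ := (l - θ) / c with hc'
  have hc'c : c' * c = l - θ := by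
    rw [hc', div_mul_cancel₀ _ hpos.ne']
  set M : Matrix (Fin (n' + 1)) (Fin (n' + 1)) ℝ :=
    θ • (1 : Matrix (Fin (n' + 1)) (Fin (n' + 1)) ℝ) +
      Matrix.of (fun i j => c' * xs i * αr j) with hM
  set T : (Fin (n' + 1) → ℝ) →ₗ[ℝ] (Fin (n' + 1) → ℝ) := Matrix.toLin' M with hT
  have hTv : ∀ v : Fin (n' + 1) → ℝ,
      T v = θ • v + (c' * ∑ j, (α j : ℝ) * v j) • xs := fun v =>
    aux_apply θ c' xs αr v
  have hdetT : LinearMap.det T = θ ^ n' * l := by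
    rw [hT, LinearMap.det_toLin', hM, aux_det n' θ c' xs αr hθ0]
    have hs1 : ∑ j, αr j * xs j = c := by rw [hc]
    rw [hs1]
    have h2 : θ + c' * c = l := by rw [hc'c]; ring
    rw [h2]
  set Q := Pα + segment ℝ (-xs) xs with hQ
  -- symmetry facts
  have hPαneg : ∀ y ∈ Pα, -y ∈ Pα := by
    intro y hy
    rw [hPα] at hy ⊢
    obtain ⟨h1, h2⟩ := hy
    refine ⟨fun i => ?_, ?_⟩
    · rw [Matrix.mulVec_neg, Pi.neg_apply, abs_neg]
      exact h1 i
    · simp only [Pi.neg_apply, mul_neg, Finset.sum_neg_distrib]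
      rw [h2, neg_zero]
  have hsegneg : ∀ s ∈ segment ℝ (-xs) xs, -s ∈ segment ℝ (-xs) xs := by
    rintro s ⟨a₁, b₁, ha₁, hb₁, hab, rfl⟩
    exact ⟨b₁, a₁, hb₁, ha₁, by linarith, by ext i; simp only [Pi.add_apply, Pi.smul_apply, Pi.neg_apply, smul_eq_mul]; ring⟩
  have hQsymm : ∀ z ∈ Q, -z ∈ Q := by
    intro z hz
    rw [hQ, Set.mem_add] at hz ⊢
    obtain ⟨y, hy, s, hs, rfl⟩ := hz
    exact ⟨-y, hPαneg y hy, -s, hsegneg s hs, by ring⟩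
  have hPαconv : Convex ℝ Pα := by
    rw [hPα]
    exact aux_conv Ar (fun j => (α j : ℝ))
  have hQconv : Convex ℝ Q := hPαconv.add (convex_segment _ _)
  -- image membership
  have himg : ∀ z ∈ T '' Q, ∃ y ∈ Pα, ∃ t : ℝ, |t| ≤ l ∧ z = θ • y + t • xs := by
    rintro z ⟨q, hq, rfl⟩
    rw [hQ, Set.mem_add] at hq
    obtain ⟨y, hy, s, hs, rfl⟩ := hq
    obtain ⟨a₁, b₁, ha₁, hb₁, hab, hsum⟩ := hs
    have hyα : ∑ j, (α j : ℝ) * y j = 0 := by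
      rw [hPα] at hy
      exact hy.2
    have hσ : |b₁ - a₁| ≤ 1 := abs_le.mpr ⟨by linarith, by linarith⟩
    have hs' : s = (b₁ - a₁) • xs := by
      rw [← hsum]
      ext i
      simp only [Pi.add_apply, Pi.smul_apply, Pi.neg_apply, smul_eq_mul]
      ring
    refine ⟨y, hy, (b₁ - a₁) * l, ?_, ?_⟩
    · rw [abs_mul, abs_of_pos hl0]
      nlinarith [abs_nonneg (b₁ - a₁)]
    · rw [hTv (y + s), hs']
      have hsum2 : ∑ j, (α j : ℝ) * (y + (b₁ - a₁) • xs) j = (b₁ - a₁) * c := by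
        simp only [Pi.add_apply, Pi.smul_apply, smul_eq_mul, mul_add]
        rw [Finset.sum_add_distrib, hyα, hc]
        rw [Finset.mul_sum]
        rw [zero_add]
        exact Finset.sum_congr rfl fun j _ => by ring
      rw [hsum2]
      ext i
      simp only [Pi.add_apply, Pi.smul_apply, smul_eq_mul]
      have : c' * ((b₁ - a₁) * c) = (b₁ - a₁) * (l - θ) := by
        rw [show c' * ((b₁ - a₁) * c) = (b₁ - a₁) * (c' * c) by ring, hc'c]
      rw [this]
      ring
  -- key claim: integer points in the image are 0
  have key : ∀ (w : Fin (n' + 1) → ℤ) (y : Fin (n' + 1) → ℝ) (t : ℝ), y ∈ Pα → 0 ≤ t → t ≤ l →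
      ((fun i => (w i : ℝ)) : Fin (n' + 1) → ℝ) = θ • y + t • xs →
      (fun i => (w i : ℝ)) = (0 : Fin (n' + 1) → ℝ) := by
    intro w y t hy ht0 htl heq
    rw [hPα] at hy
    obtain ⟨hyA, hyα⟩ := hy
    rcases le_or_gt t 1 with ht1 | ht1
    · refine hint _ ?_ (fun i => ⟨w i, rfl⟩)
      rw [hP]
      intro i
      have hAz : (Ar *ᵥ (fun i => (w i : ℝ))) i = θ * (Ar *ᵥ y) i + t * (Ar *ᵥ xs) i := by
        rw [heq, Matrix.mulVec_add, Matrix.mulVec_smul, Matrix.mulVec_smul]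
        simp
      have hxb : (Ar *ᵥ xs) i ≤ (b i : ℝ) := by
        rw [hP] at hxsP
        exact hxsP i
      have hb0 : (0 : ℝ) ≤ (b i : ℝ) := by
        rw [hP] at hzero
        have h0 := hzero i
        simpa using h0
      have hya := abs_le.mp (hyA i)
      have h1 : (Ar *ᵥ fun i => (w i : ℝ)) i < (b i : ℝ) + 1 := by
        rw [hAz]
        nlinarith
      have hcast : (Ar *ᵥ fun i => (w i : ℝ)) i = (((A *ᵥ w) i : ℤ) : ℝ) := by
        simp only [hAr, Matrix.mulVec, dotProduct, Matrix.map_apply]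
        push_cast
        rfl
      rw [hcast] at h1 ⊢
      have h2 : (A *ᵥ w) i < b i + 1 := by exact_mod_cast h1
      exact_mod_cast Int.lt_add_one_iff.mp h2
    · exfalso
      have hαz : ∑ j, (α j : ℝ) * (w j : ℝ) = t * c := by
        have hcongr := congrArg (fun v : Fin (n' + 1) → ℝ => ∑ j, (α j : ℝ) * v j) heq
        simp only [Pi.add_apply, Pi.smul_apply, smul_eq_mul, mul_add] at hcongr
        rw [hcongr, Finset.sum_add_distrib]
        have e1 : ∑ j, (α j : ℝ) * (θ * y j) = θ * ∑ j, (α j : ℝ) * y j := by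
          rw [Finset.mul_sum]; exact Finset.sum_congr rfl fun j _ => by ring
        have e2 : ∑ j, (α j : ℝ) * (t * xs j) = t * ∑ j, (α j : ℝ) * xs j := by
          rw [Finset.mul_sum]; exact Finset.sum_congr rfl fun j _ => by ring
        rw [e1, e2, hyα, ← hc]
        ring
      have hWr : ((∑ j, α j * w j : ℤ) : ℝ) = t * c := by
        rw [← hαz]
        push_cast
        rfl
      have h2 : c < t * c := by nlinarith
      have h3 : (⌊c⌋ : ℝ) < ((∑ j, α j * w j : ℤ) : ℝ) := by rw [hWr]; linarith
      have h4 : (⌊c⌋ : ℤ) < ∑ j, α j * w j := by exact_mod_cast h3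
      have h5 : ((⌊c⌋ : ℝ) + 1) ≤ ((∑ j, α j * w j : ℤ) : ℝ) := by
        exact_mod_cast Int.lt_iff_add_one_le.mp h4
      have h6 : t * c ≤ l * c := by nlinarith
      rw [hWr] at h5
      linarith
  -- Minkowski
  have hKconv : Convex ℝ (T '' Q) := hQconv.linear_image T
  have hKsymm : ∀ z ∈ T '' Q, -z ∈ T '' Q := by
    rintro _ ⟨q, hq, rfl⟩
    exact ⟨-q, hQsymm q hq, map_neg T q⟩
  have fund := ZSpan.isAddFundamentalDomain' (Pi.basisFun ℝ (Fin (n' + 1))) volume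
  haveI : Countable
      ((Submodule.span ℤ (Set.range (Pi.basisFun ℝ (Fin (n' + 1))))).toAddSubgroup) :=
    inferInstanceAs (Countable (Submodule.span ℤ (Set.range (Pi.basisFun ℝ (Fin (n' + 1))))))
  have hF1 : volume (ZSpan.fundamentalDomain (Pi.basisFun ℝ (Fin (n' + 1)))) = 1 := by
    rw [ZSpan.fundamentalDomain_pi_basisFun]
    simp [volume_pi_pi, Real.volume_Ico]
  have hvolK : volume (T '' Q) = ENNReal.ofReal (θ ^ n' * l) * volume Q := by
    rw [Measure.addHaar_image_linearMap, hdetT, abs_of_pos (by positivity)]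
  have hfr : Module.finrank ℝ (Fin (n' + 1) → ℝ) = n' + 1 := by
    rw [Module.finrank_pi, Fintype.card_fin]
  have hlt : volume (ZSpan.fundamentalDomain (Pi.basisFun ℝ (Fin (n' + 1)))) *
      2 ^ (Module.finrank ℝ (Fin (n' + 1) → ℝ)) < volume (T '' Q) := by
    rw [hF1, one_mul, hvolK, hfr]
    calc (2 : ENNReal) ^ (n' + 1) = 1 * 2 ^ (n' + 1) := (one_mul _).symm
    _ < ENNReal.ofReal (θ ^ n' * l) * 2 ^ (n' + 1) := by
        rw [ENNReal.mul_lt_mul_iff_left (by positivity) (by simp)]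
        rw [← ENNReal.ofReal_one]
        exact (ENNReal.ofReal_lt_ofReal_iff (by positivity)).mpr hd1
    _ ≤ ENNReal.ofReal (θ ^ n' * l) * volume Q := by
        exact mul_le_mul_right hcon _
  obtain ⟨x, hx0, hxmem⟩ :=
    exists_ne_zero_mem_lattice_of_measure_mul_two_pow_lt_measure fund hKsymm hKconv hlt
  -- x has integer coordinates
  have hxint : ∀ i, ∃ w : ℤ, (x : Fin (n' + 1) → ℝ) i = (w : ℝ) := by
    have hsp := ((Pi.basisFun ℝ (Fin (n' + 1))).mem_span_iff_repr_mem ℤ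
      (x : Fin (n' + 1) → ℝ)).mp x.2
    intro i
    obtain ⟨w, hw⟩ := hsp i
    refine ⟨w, ?_⟩
    have := hw
    simp only [Pi.basisFun_repr, algebraMap_int_eq, eq_intCast] at this
    exact this.symm
  choose w hw using hxint
  have hxw : (x : Fin (n' + 1) → ℝ) = fun i => (w i : ℝ) := funext hw
  obtain ⟨y, hy, t, htl, heq⟩ := himg _ hxmem
  have habs := abs_le.mp htl
  rcases le_or_gt 0 t with ht | ht
  · have hkey := key w y t hy ht habs.2 (by rw [← hxw, heq])
    apply hx0
    have : (x : Fin (n' + 1) → ℝ) = 0 := by rw [hxw, hkey]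
    exact_mod_cast (ZeroMemClass.coe_eq_zero).mp this
  · have hyneg := hPαneg y hy
    have heqneg : ((fun i => ((-w) i : ℝ)) : Fin (n' + 1) → ℝ) = θ • (-y) + (-t) • xs := by
      ext i
      have := congrFun heq i
      rw [hxw] at this
      simp only [Pi.add_apply, Pi.smul_apply, Pi.neg_apply, smul_eq_mul] at this ⊢
      push_cast
      linarith [this]
    have hkey := key (-w) (-y) (-t) hyneg (by linarith) (by linarith [habs.1]) heqneg
    apply hx0
    have hneg : ∀ i, -((w i : ℝ)) = 0 := by
      intro i
      have := congrFun hkey i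
      simpa using this
    have : (x : Fin (n' + 1) → ℝ) = 0 := by
      rw [hxw]
      ext i
      have := hneg i
      simpa using this
    exact_mod_cast (ZeroMemClass.coe_eq_zero).mp this
end

section
/- Let A ∈ ℤ^{m×2}, b ∈ ℤ^m with P(A,b) ∩ ℤ² = {0} and P(A,b) full-dimensional (dimension 2), and let α ∈ ℤ² be nonzero. Define Δ(A,α) := max over rows aⱼ of A of |det(α, aⱼ)|. Then for every x ∈ P(A,b), αᵀx < Δ(A,α). -/
open Matrix

lemma core2d {m : ℕ} (A : Matrix (Fin m) (Fin 2) ℤ) (b : Fin m → ℤ)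
    (p q u w : ℤ) (huw : p * u + q * w = 1)
    (N : ℕ) (hN : ∀ j, |p * A j 1 - q * A j 0| ≤ (N : ℤ))
    (hb : ∀ j, 0 ≤ b j)
    (x : Fin 2 → ℝ) (hx : ∀ j, (A j 0 : ℝ) * x 0 + (A j 1 : ℝ) * x 1 ≤ (b j : ℝ))
    (Hint : ∀ z0 z1 : ℤ, (∀ j, A j 0 * z0 + A j 1 * z1 ≤ b j) → z0 = 0 ∧ z1 = 0)
    (hge : (N : ℝ) ≤ (p : ℝ) * x 0 + (q : ℝ) * x 1) : False := by
  rcases Nat.eq_zero_or_pos N with hN0 | hNpos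
  · -- N = 0 : the point (-q, p) is a nonzero integer point of P
    subst hN0
    have hD : ∀ j, p * A j 1 - q * A j 0 = 0 := by
      intro j
      have := hN j
      simp only [Nat.cast_zero] at this
      exact abs_nonpos_iff.mp this
    obtain ⟨h1, h2⟩ := Hint (-q) p (fun j => by
      have h := hD j
      have hbj := hb j
      linarith)
    have hq0 : q = 0 := by omega
    rw [hq0, h2] at huw; simp at huw
  · -- N ≥ 1
    set X : ℝ := (p : ℝ) * x 0 + (q : ℝ) * x 1 with hXdef
    have hX0 : 0 < X := lt_of_lt_of_le (by exact_mod_cast hNpos) hge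
    have hpqR : (p : ℝ) ^ 2 + (q : ℝ) ^ 2 ≠ 0 := by
      have hpq : p ≠ 0 ∨ q ≠ 0 := by
        by_contra hc
        push_neg at hc
        rw [hc.1, hc.2] at huw; simp at huw
      rcases hpq with h | h
      · have : (p : ℝ) ≠ 0 := Int.cast_ne_zero.mpr h
        positivity
      · have : (q : ℝ) ≠ 0 := Int.cast_ne_zero.mpr h
        positivity
    have huwR : (p : ℝ) * u + (q : ℝ) * w = 1 := by exact_mod_cast huw
    set s : ℕ → ℝ := fun k => (k : ℝ) / X with hsdef
    have hs : ∀ k : ℕ, s k * X = (k : ℝ) := fun k => div_mul_cancel₀ _ hX0.ne'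
    set c : ℕ → ℝ := fun k =>
      ((p : ℝ) * (s k * x 1 - (k : ℝ) * w) - (q : ℝ) * (s k * x 0 - (k : ℝ) * u))
        / ((p : ℝ) ^ 2 + (q : ℝ) ^ 2) with hcdef
    have h1 : ∀ k : ℕ, c k * (q : ℝ) = (k : ℝ) * u - s k * x 0 := by
      intro k
      rw [hcdef]
      simp only
      rw [div_mul_eq_mul_div, div_eq_iff hpqR]
      linear_combination (-((p:ℝ) * s k)) * hXdef + (p : ℝ) * hs k
        + (-((p:ℝ) * k)) * huwR
    have h2 : ∀ k : ℕ, c k * (p : ℝ) = s k * x 1 - (k : ℝ) * w := by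
      intro k
      rw [hcdef]
      simp only
      rw [div_mul_eq_mul_div, div_eq_iff hpqR]
      linear_combination ((q:ℝ) * s k) * hXdef + (-(q : ℝ)) * hs k
        + ((q:ℝ) * k) * huwR
    set δ : ℕ → ℝ := fun k => (⌈c k⌉ : ℝ) - c k with hδdef
    have hδ0 : ∀ k, 0 ≤ δ k := fun k => by
      simp only [hδdef, sub_nonneg]; exact Int.le_ceil _
    have hδ1 : ∀ k, δ k < 1 := fun k => by
      simp only [hδdef, sub_lt_iff_lt_add]
      exact lt_of_lt_of_le (Int.ceil_lt_add_one _) (by linarith)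
    set Z0 : ℕ → ℤ := fun k => (k : ℤ) * u + ⌈c k⌉ * (-q) with hZ0def
    set Z1 : ℕ → ℤ := fun k => (k : ℤ) * w + ⌈c k⌉ * p with hZ1def
    have hZ0R : ∀ k : ℕ, (Z0 k : ℝ) = s k * x 0 + δ k * (-(q : ℝ)) := by
      intro k
      simp only [hZ0def, hδdef]
      push_cast
      linear_combination (-1 : ℝ) * h1 k
    have hZ1R : ∀ k : ℕ, (Z1 k : ℝ) = s k * x 1 + δ k * (p : ℝ) := by
      intro k
      simp only [hZ1def, hδdef]
      push_cast
      linear_combination h2 k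
    -- main argument, for ordered pair k > l with close offsets
    have main : ∀ k l : ℕ, k ≤ N → l < k → |δ k - δ l| * (N : ℝ) < 1 → False := by
      intro k l hkN hlk hclose
      set z0 : ℤ := Z0 k - Z0 l with hz0def
      set z1 : ℤ := Z1 k - Z1 l with hz1def
      set t : ℝ := ((k : ℝ) - (l : ℝ)) / X with htdef
      have ht0 : 0 < t := by
        apply div_pos _ hX0
        have : (l : ℝ) < k := by exact_mod_cast hlk
        linarith
      have ht1 : t ≤ 1 := by
        rw [htdef, div_le_one hX0]
        have hk : (k : ℝ) ≤ N := by exact_mod_cast hkN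
        have hl : (0 : ℝ) ≤ l := Nat.cast_nonneg l
        linarith
      have hz0R : (z0 : ℝ) = t * x 0 + (δ k - δ l) * (-(q : ℝ)) := by
        rw [hz0def]
        push_cast
        rw [hZ0R k, hZ0R l]
        simp only [hsdef, htdef]
        ring
      have hz1R : (z1 : ℝ) = t * x 1 + (δ k - δ l) * (p : ℝ) := by
        rw [hz1def]
        push_cast
        rw [hZ1R k, hZ1R l]
        simp only [hsdef, htdef]
        ring
      obtain ⟨e0, e1⟩ := Hint z0 z1 (fun j => by
        have hAz : (A j 0 : ℝ) * z0 + (A j 1 : ℝ) * z1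
            = t * ((A j 0 : ℝ) * x 0 + (A j 1 : ℝ) * x 1)
              + (δ k - δ l) * ((p : ℝ) * A j 1 - (q : ℝ) * A j 0) := by
          rw [hz0R, hz1R]; ring
        have hbj : (0 : ℝ) ≤ (b j : ℝ) := by exact_mod_cast hb j
        have hfirst : t * ((A j 0 : ℝ) * x 0 + (A j 1 : ℝ) * x 1) ≤ (b j : ℝ) := by
          nlinarith [mul_nonneg (sub_nonneg.2 ht1) hbj,
            mul_nonneg ht0.le (sub_nonneg.2 (hx j))]
        have hDj : |(p : ℝ) * A j 1 - (q : ℝ) * A j 0| ≤ (N : ℝ) := by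
          have := hN j
          have : (|p * A j 1 - q * A j 0| : ℤ) ≤ (N : ℤ) := this
          calc |(p : ℝ) * A j 1 - (q : ℝ) * A j 0|
              = ((|p * A j 1 - q * A j 0| : ℤ) : ℝ) := by push_cast; ring_nf
            _ ≤ (N : ℝ) := by exact_mod_cast this
        have hsecond : (δ k - δ l) * ((p : ℝ) * A j 1 - (q : ℝ) * A j 0) < 1 := by
          calc (δ k - δ l) * ((p : ℝ) * A j 1 - (q : ℝ) * A j 0)
              ≤ |(δ k - δ l) * ((p : ℝ) * A j 1 - (q : ℝ) * A j 0)| := le_abs_self _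
            _ = |δ k - δ l| * |(p : ℝ) * A j 1 - (q : ℝ) * A j 0| := abs_mul _ _
            _ ≤ |δ k - δ l| * (N : ℝ) := by
                exact mul_le_mul_of_nonneg_left hDj (abs_nonneg _)
            _ < 1 := hclose
        have hreal : (A j 0 : ℝ) * z0 + (A j 1 : ℝ) * z1 < (b j : ℝ) + 1 := by
          rw [hAz]; linarith
        have hint' : ((A j 0 * z0 + A j 1 * z1 : ℤ) : ℝ) < ((b j + 1 : ℤ) : ℝ) := by
          push_cast; push_cast at hreal; linarith
        have hintZ : (A j 0 * z0 + A j 1 * z1 : ℤ) < b j + 1 := by exact_mod_cast hint'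
        omega)
      have hsum : p * z0 + q * z1 = (k : ℤ) - (l : ℤ) := by
        simp only [hz0def, hz1def, hZ0def, hZ1def]
        linear_combination ((k : ℤ) - (l : ℤ)) * huw
      rw [e0, e1] at hsum
      simp at hsum
      omega
    -- pigeonhole
    have hmaps : ∀ k ∈ Finset.range (N + 1),
        (⌊δ k * (N : ℝ)⌋).toNat ∈ Finset.range N := by
      intro k _
      simp only [Finset.mem_range]
      have hNp : (0 : ℝ) < N := by exact_mod_cast hNpos
      have h1' : δ k * (N : ℝ) < (N : ℝ) := by nlinarith [hδ1 k]
      have h2' : ⌊δ k * (N : ℝ)⌋ < (N : ℤ) := Int.floor_lt.mpr (by exact_mod_cast h1')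
      omega
    obtain ⟨k, hk, l, hl, hkl, hfkl⟩ :=
      Finset.exists_ne_map_eq_of_card_lt_of_maps_to
        (by simp) hmaps
    simp only [Finset.mem_range] at hk hl
    have heq : ⌊δ k * (N : ℝ)⌋ = ⌊δ l * (N : ℝ)⌋ := by
      have h0k : 0 ≤ ⌊δ k * (N : ℝ)⌋ :=
        Int.floor_nonneg.mpr (mul_nonneg (hδ0 k) (Nat.cast_nonneg N))
      have h0l : 0 ≤ ⌊δ l * (N : ℝ)⌋ :=
        Int.floor_nonneg.mpr (mul_nonneg (hδ0 l) (Nat.cast_nonneg N))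
      omega
    have hcast : (⌊δ k * (N : ℝ)⌋ : ℝ) = (⌊δ l * (N : ℝ)⌋ : ℝ) := by
      exact_mod_cast heq
    have habs : |(δ k - δ l) * (N : ℝ)| < 1 := by
      rw [abs_lt]
      constructor
      · nlinarith [Int.floor_le (δ k * (N : ℝ)), Int.lt_floor_add_one (δ l * (N : ℝ))]
      · nlinarith [Int.floor_le (δ l * (N : ℝ)), Int.lt_floor_add_one (δ k * (N : ℝ))]
    have hclose : ∀ a b' : ℕ, |δ a - δ b'| * (N : ℝ) = |(δ a - δ b') * (N : ℝ)| := by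
      intro a b'
      rw [abs_mul, abs_of_nonneg (Nat.cast_nonneg N : (0:ℝ) ≤ (N : ℝ))]
    rcases hkl.lt_or_gt with hlt | hlt
    · refine main l k (by omega) hlt ?_
      rw [hclose, show (δ l - δ k) * (N : ℝ) = -((δ k - δ l) * (N : ℝ)) by ring, abs_neg]
      exact habs
    · exact main k l (by omega) hlt (by rw [hclose]; exact habs)

/-- Two-dimensional proximity bound (`κ₂ < 1`). -/
theorem stmt6 {m : ℕ} (A : Matrix (Fin m) (Fin 2) ℤ) (b : Fin m → ℤ)
    (α : Fin 2 → ℤ) (hα : α ≠ 0)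
    (P : Set (Fin 2 → ℝ))
    (hP : P = {x | ∀ i, (A.map (Int.cast : ℤ → ℝ)).mulVec x i ≤ (b i : ℝ)})
    (hzero : (0 : Fin 2 → ℝ) ∈ P)
    (hint : ∀ x ∈ P, (∀ i, ∃ z : ℤ, x i = (z : ℝ)) → x = 0)
    (hfulldim : (interior P).Nonempty)
    (Δ : ℕ)
    (hΔ : Δ = Finset.univ.sup fun j : Fin m =>
      (Matrix.det !![α 0, A j 0; α 1, A j 1]).natAbs) :
    ∀ x ∈ P, ∑ i, (α i : ℝ) * x i < (Δ : ℝ) := by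
  intro x hxP
  by_contra hcon
  push_neg at hcon
  rw [Fin.sum_univ_two] at hcon
  rw [hP] at hxP hzero
  have hx : ∀ j, (A j 0 : ℝ) * x 0 + (A j 1 : ℝ) * x 1 ≤ (b j : ℝ) := by
    intro j
    have := hxP j
    simpa [Matrix.mulVec, dotProduct, Fin.sum_univ_two, Matrix.map_apply] using this
  have hb : ∀ j, 0 ≤ b j := by
    intro j
    have := hzero j
    simp [Matrix.mulVec, dotProduct, Fin.sum_univ_two, Matrix.map_apply] at this
    exact_mod_cast this
  have Hint : ∀ z0 z1 : ℤ, (∀ j, A j 0 * z0 + A j 1 * z1 ≤ b j) → z0 = 0 ∧ z1 = 0 := by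
    intro z0 z1 hz
    have hmem : (![(z0 : ℝ), (z1 : ℝ)]) ∈ P := by
      rw [hP]
      intro j
      simp only [Set.mem_setOf_eq, Matrix.mulVec, dotProduct, Fin.sum_univ_two,
        Matrix.map_apply, Matrix.cons_val_zero, Matrix.cons_val_one, Matrix.head_cons]
      exact_mod_cast hz j
    have hcoord : ∀ i, ∃ z : ℤ, (![(z0 : ℝ), (z1 : ℝ)]) i = (z : ℝ) := by
      intro i
      fin_cases i
      · exact ⟨z0, rfl⟩
      · exact ⟨z1, rfl⟩
    have h0 := hint _ hmem hcoord
    constructor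
    · have := congrFun h0 0
      simp at this
      exact_mod_cast this
    · have := congrFun h0 1
      simp at this
      exact_mod_cast this
  -- gcd normalization
  have hα' : α 0 ≠ 0 ∨ α 1 ≠ 0 := by
    by_contra hc
    push_neg at hc
    apply hα
    funext i
    fin_cases i
    · exact hc.1
    · exact hc.2
  set g : ℕ := Int.gcd (α 0) (α 1) with hgdef
  have hg0 : 0 < g := by
    rcases hα' with h | h
    · exact Int.gcd_pos_of_ne_zero_left _ h
    · exact Int.gcd_pos_of_ne_zero_right _ h
  set p : ℤ := α 0 / (g : ℤ) with hpdef
  set q : ℤ := α 1 / (g : ℤ) with hqdef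
  have hp : (g : ℤ) * p = α 0 := Int.mul_ediv_cancel' (Int.gcd_dvd_left _ _)
  have hq : (g : ℤ) * q = α 1 := Int.mul_ediv_cancel' (Int.gcd_dvd_right _ _)
  have hcop : Int.gcd p q = 1 := Int.gcd_div_gcd_div_gcd hg0
  set u : ℤ := Int.gcdA p q with hudef
  set w : ℤ := Int.gcdB p q with hwdef
  have huw : p * u + q * w = 1 := by
    have := Int.gcd_eq_gcd_ab p q
    rw [hcop] at this
    exact_mod_cast this.symm
  set N : ℕ := Finset.univ.sup (fun j : Fin m => (p * A j 1 - q * A j 0).natAbs)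
    with hNdef
  have hN : ∀ j, |p * A j 1 - q * A j 0| ≤ (N : ℤ) := by
    intro j
    rw [Int.abs_eq_natAbs]
    exact_mod_cast Finset.le_sup (f := fun j : Fin m => (p * A j 1 - q * A j 0).natAbs)
      (Finset.mem_univ j)
  have hgN : g * N ≤ Δ := by
    rcases isEmpty_or_nonempty (Fin m) with hm | hm
    · have : N = 0 := by
        rw [hNdef, Finset.univ_eq_empty, Finset.sup_empty]
        rfl
      simp [this]
    · obtain ⟨j, _, hj⟩ := Finset.exists_mem_eq_sup Finset.univ Finset.univ_nonempty
        (fun j : Fin m => (p * A j 1 - q * A j 0).natAbs)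
      have hdet : Matrix.det !![α 0, A j 0; α 1, A j 1]
          = (g : ℤ) * (p * A j 1 - q * A j 0) := by
        rw [Matrix.det_fin_two_of, ← hp, ← hq]
        ring
      have hle : (Matrix.det !![α 0, A j 0; α 1, A j 1]).natAbs ≤ Δ := by
        rw [hΔ]
        exact Finset.le_sup
          (f := fun j : Fin m => (Matrix.det !![α 0, A j 0; α 1, A j 1]).natAbs)
          (Finset.mem_univ j)
      rw [hNdef, hj]
      calc g * (p * A j 1 - q * A j 0).natAbs
          = (Matrix.det !![α 0, A j 0; α 1, A j 1]).natAbs := by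
            rw [hdet, Int.natAbs_mul]
            simp
        _ ≤ Δ := hle
  have hgR : (0 : ℝ) < (g : ℝ) := by exact_mod_cast hg0
  have hge : (N : ℝ) ≤ (p : ℝ) * x 0 + (q : ℝ) * x 1 := by
    have h1 : ((g : ℝ)) * (N : ℝ) ≤ (Δ : ℝ) := by exact_mod_cast hgN
    have h2 : (α 0 : ℝ) = (g : ℝ) * (p : ℝ) := by exact_mod_cast hp.symm
    have h3 : (α 1 : ℝ) = (g : ℝ) * (q : ℝ) := by exact_mod_cast hq.symm
    have h4 : (g : ℝ) * (N : ℝ) ≤ (g : ℝ) * ((p : ℝ) * x 0 + (q : ℝ) * x 1) := by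
      rw [h2, h3] at hcon
      nlinarith
    exact le_of_mul_le_mul_left h4 hgR
  exact core2d A b p q u w huw N hN hb x hx Hint hge
end

section
/- Let T ∈ ℤ^{m×n} be totally unimodular, B ∈ ℤ^{n×n} invertible with |det B| = Δ, and A = TB. Set Λ := B⁻¹ℤⁿ. Let I ⊆ [m] index rows of A such that ker A_I is one-dimensional, and let j ∉ I be such that the square matrix A_{I∪{j}} (with last row aⱼᵀ) is invertible. Then the vector r := A_{I∪{j}}⁻¹ eₙ lies in Λ, i.e., Br ∈ ℤⁿ. -/
open Matrix

/-!
Restricting `A = T B` to the rows `I ∪ {j}` gives `A_{I∪{j}} = T_{I∪{j}} B`. Since `A_{I∪{j}}` is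
invertible, so is the square submatrix `T_{I∪{j}}` of the totally unimodular `T`, whose determinant
is therefore `±1`; hence `T_{I∪{j}}⁻¹` is integral, and `B r = B A_{I∪{j}}⁻¹ eₙ = T_{I∪{j}}⁻¹ eₙ`.
-/

namespace Matrix

variable {m n ι R : Type*} [CommRing R]

theorem IsTotallyUnimodular.isUnit_det_submatrix [Fintype ι] [DecidableEq ι]
    {T : Matrix m n R} (hT : T.IsTotallyUnimodular) (f : ι → m) (g : ι → n)
    (hdet : (T.submatrix f g).det ≠ 0) : IsUnit (T.submatrix f g).det := by
  obtain ⟨s, hs⟩ := (isTotallyUnimodular_iff_fintype T).mp hT ι f g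
  rw [← hs] at hdet ⊢
  cases s with
  | zero => exact absurd SignType.coe_zero hdet
  | pos => exact isUnit_one
  | neg => exact isUnit_one.neg

theorem map_nonsing_inv [Fintype ι] [DecidableEq ι] {S : Type*} [CommRing S] (f : R →+* S)
    {N : Matrix ι ι R} (hN : IsUnit N.det) : (N.map f)⁻¹ = N⁻¹.map f := by
  apply inv_eq_right_inv
  rw [← Matrix.map_mul, mul_nonsing_inv N hN, Matrix.map_one f f.map_zero f.map_one]

theorem mul_nonsing_inv_mul_left [Fintype ι] [DecidableEq ι] {S B : Matrix ι ι R}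
    (h : IsUnit (S * B).det) : B * (S * B)⁻¹ = S⁻¹ := by
  rw [det_mul, IsUnit.mul_iff] at h
  rw [mul_inv_rev, ← Matrix.mul_assoc, mul_nonsing_inv B h.2, Matrix.one_mul]

end Matrix

theorem stmt10_general {m k : ℕ} (T : Matrix (Fin m) (Fin (k + 1)) ℤ)
    (hT : T.IsTotallyUnimodular)
    (B : Matrix (Fin (k + 1)) (Fin (k + 1)) ℤ)
    (A : Matrix (Fin m) (Fin (k + 1)) ℤ) (hA : A = T * B)
    (ρ : Fin (k + 1) → Fin m)
    (M : Matrix (Fin (k + 1)) (Fin (k + 1)) ℝ)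
    (hM : M = (A.submatrix ρ id).map (Int.cast : ℤ → ℝ))
    (hMinv : IsUnit M.det)
    (r : Fin (k + 1) → ℝ) (hr : r = M⁻¹.mulVec (Pi.single (Fin.last k) 1)) :
    ∀ i, ∃ z : ℤ, (B.map (Int.cast : ℤ → ℝ)).mulVec r i = (z : ℝ) := by
  set f := Int.castRingHom ℝ
  set S := T.submatrix ρ id
  have hMS : M = S.map f * B.map f := by
    rw [hM, ← Matrix.map_mul, hA]
    rfl
  have hS : IsUnit S.det := by
    refine hT.isUnit_det_submatrix ρ id fun h => ?_
    have hSf : (S.map f).det = f S.det := (f.map_det S).symm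
    rw [hMS, det_mul, hSf, h, map_zero, zero_mul] at hMinv
    exact not_isUnit_zero hMinv
  have hBr : B.map f *ᵥ r = S⁻¹.map f *ᵥ Pi.single (Fin.last k) 1 := by
    rw [hr, mulVec_mulVec, hMS, mul_nonsing_inv_mul_left (hMS ▸ hMinv), map_nonsing_inv f hS]
  intro i
  refine ⟨(S⁻¹ *ᵥ Pi.single (Fin.last k) 1) i, ?_⟩
  have he : f ∘ Pi.single (Fin.last k) 1 = Pi.single (Fin.last k) 1 := by
    ext j
    simp [Pi.single_apply, apply_ite]
  rw [← eq_intCast f, RingHom.map_mulVec, he, ← hBr]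
  rfl

/-- Lemma 6, first claim: with `A = TB` strictly Δ-modular, `I` indexing rows of `A`
with one-dimensional kernel, and `j ∉ I` completing an invertible square submatrix
`A_{I ∪ {j}}` (with last row `aⱼ`), the vector `r = A_{I∪{j}}⁻¹ eₙ` lies in the
lattice `Λ = B⁻¹ℤⁿ`, i.e. `B r` is integral.  Here `n = k + 1`. -/
theorem stmt10 {m k : ℕ} (T : Matrix (Fin m) (Fin (k + 1)) ℤ)
    (hT : T.IsTotallyUnimodular)
    (B : Matrix (Fin (k + 1)) (Fin (k + 1)) ℤ) (Δ : ℕ)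
    (hB : B.det.natAbs = Δ) (hΔ : 0 < Δ)
    (A : Matrix (Fin m) (Fin (k + 1)) ℤ) (hA : A = T * B)
    (ρ : Fin (k + 1) → Fin m) (hρ : Function.Injective ρ)
    -- `ker A_I` is one-dimensional, where `I` indexes the first `k` rows `ρ` picks out
    (hker : Module.finrank ℝ (LinearMap.ker
      (((A.submatrix (fun s : Fin k => ρ s.castSucc) id).map
        (Int.cast : ℤ → ℝ)).mulVecLin)) = 1)
    (M : Matrix (Fin (k + 1)) (Fin (k + 1)) ℝ)
    (hM : M = (A.submatrix ρ id).map (Int.cast : ℤ → ℝ))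
    (hMinv : IsUnit M.det)
    (r : Fin (k + 1) → ℝ) (hr : r = M⁻¹.mulVec (Pi.single (Fin.last k) 1)) :
    ∀ i, ∃ z : ℤ, (B.map (Int.cast : ℤ → ℝ)).mulVec r i = (z : ℝ) :=
  stmt10_general T hT B A hA ρ M hM hMinv r hr
end

section
/- With B = [[I_{n−1}, 0],[β^k, Δ]] where β^k = (0,…,0,Δ−1,…,Δ−1) ∈ ℤ^{n−1} has k zeros, Δ − n + k ≥ 1, and P(B) := {x ∈ ℝⁿ : 0 ≤ Bx ≤ u} with u = (1,…,1, Δ−n+k, 1,…,1)ᵀ (k ones, then Δ−n+k, then n−k−1 ones), the number of integer points in P(B) is exactly 2^k. -/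
/-!
The first `n - 1` rows of `B` are the identity, so `0 ≤ Bz ≤ u` gives `0 ≤ z i ≤ u i` for
`i < n - 1`. The last row of `Bz` is `Δ q - S` with `q = ∑_{j ≥ k} z j` and
`S = ∑_{k ≤ j < n - 1} z j`. Since `0 ≤ S` and `S + u (n - 1) ≤ ∑_{j ≥ k} u j = Δ - 1`,
`Δ q ∈ [S, S + u (n - 1)] ⊆ [0, Δ)` forces `q = 0`, hence `S = 0`, so every coordinate from `k` on
vanishes. The integer points are therefore the `0/1` vectors supported on the first `k`
coordinates.
-/

open Matrix Finset

theorem Int.eq_zero_of_mul_sub_mem_Icc {Δ q S U : ℤ} (hS : 0 ≤ S) (hSU : S + U < Δ)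
    (h : Δ * q - S ∈ Set.Icc 0 U) : q = 0 ∧ S = 0 := by
  obtain ⟨h0, h1⟩ := h
  have hq : q = 0 := by
    rcases lt_trichotomy q 0 with hq | hq | hq
    · nlinarith
    · exact hq
    · nlinarith
  subst hq
  constructor <;> linarith

namespace BetaParallelepiped

def betaMatrix (n k : ℕ) (Δ : ℤ) : Matrix (Fin n) (Fin n) ℤ := fun i j =>
  if (i : ℕ) < n - 1 then (if i = j then 1 else 0)
  else (if (j : ℕ) < k then 0 else if (j : ℕ) = n - 1 then Δ else Δ - 1)

def betaBound (n k : ℕ) (Δ : ℤ) : Fin n → ℤ := fun i => if (i : ℕ) = k then Δ - n + k else 1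

def headOnes (n k : ℕ) : Fin n → ℤ := fun i => if (i : ℕ) < k then 1 else 0

def tail (n k : ℕ) : Finset (Fin n) := univ.filter fun j => k ≤ (j : ℕ)

variable {n k : ℕ} {Δ : ℤ}

theorem mulVec_apply_of_lt (z : Fin n → ℤ) {i : Fin n} (hi : (i : ℕ) < n - 1) :
    (betaMatrix n k Δ *ᵥ z) i = z i := by
  simp [betaMatrix, mulVec, dotProduct, hi]

theorem mulVec_apply_of_not_lt (z : Fin n → ℤ) {i : Fin n} (hi : ¬ (i : ℕ) < n - 1) :
    (betaMatrix n k Δ *ᵥ z) i = Δ * ∑ j ∈ tail n k, z j - ∑ j ∈ (tail n k).erase i, z j := by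
  have hrow : ∀ j, betaMatrix n k Δ i j * z j
      = Δ * (if j ∈ tail n k then z j else 0) - (if j ∈ (tail n k).erase i then z j else 0) := by
    intro j
    have hji : (j : ℕ) = n - 1 ↔ j = i := by rw [Fin.ext_iff]; omega
    by_cases hjk : (j : ℕ) < k
    · simp [betaMatrix, tail, hi, hjk, Nat.not_le.2 hjk]
    · have hkj : k ≤ (j : ℕ) := Nat.not_lt.1 hjk
      by_cases hj : j = i
      · subst hj
        have hlast : (j : ℕ) = n - 1 := hji.2 rfl
        simp [betaMatrix, tail, hlast, hlast ▸ hjk, hlast ▸ hkj]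
      · simp [betaMatrix, tail, hi, hjk, hj, hkj, hji]
        ring
  simp only [mulVec, dotProduct, hrow, sum_sub_distrib, ← mul_sum, sum_ite_mem, univ_inter]

theorem sum_betaBound_tail (hk : k < n) : ∑ j ∈ tail n k, betaBound n k Δ j = Δ - 1 := by
  have htail : tail n k = Ici ⟨k, hk⟩ := by ext j; simp [tail, Fin.le_def]
  have hsplit : ∀ j : Fin n, betaBound n k Δ j = (if j = ⟨k, hk⟩ then Δ - n + k - 1 else 0) + 1 := by
    intro j
    by_cases h : (j : ℕ) = k <;> simp [betaBound, h, Fin.ext_iff]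
  simp only [hsplit, sum_add_distrib, sum_ite_eq', htail, mem_Ici, le_refl, if_true, sum_const,
    Fin.card_Ici, nsmul_eq_mul, mul_one]
  push_cast [Nat.cast_sub hk.le]
  ring

theorem card_Icc_headOnes (hk : k ≤ n) : #(Icc 0 (headOnes n k)) = 2 ^ k := by
  simp only [headOnes, Pi.card_Icc, Pi.zero_apply, Int.card_Icc, apply_ite]
  norm_num
  rw [Fin.prod_univ_eq_prod_range (fun i => if i < k then (2 : ℤ).toNat else 1)]
  have hfilter : (range n).filter (· < k) = range k := by ext; simp; omega
  simp [prod_ite, hfilter]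

theorem betaBound_nonneg (hΔ : 0 ≤ Δ - n + k) (i : Fin n) : 0 ≤ betaBound n k Δ i := by
  unfold betaBound; split_ifs <;> omega

theorem headOnes_le_betaBound (hΔ : 0 ≤ Δ - n + k) (i : Fin n) :
    headOnes n k i ≤ betaBound n k Δ i := by
  by_cases hik : (i : ℕ) < k
  · simp [headOnes, betaBound, hik, hik.ne]
  · simpa [headOnes, hik] using betaBound_nonneg hΔ i

theorem eq_zero_of_mem_tail (hkn : k ≤ n - 1) {z : Fin n → ℤ}
    (hz : ∀ i, 0 ≤ (betaMatrix n k Δ *ᵥ z) i ∧ (betaMatrix n k Δ *ᵥ z) i ≤ betaBound n k Δ i)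
    {j : Fin n} (hj : j ∈ tail n k) : z j = 0 := by
  have hn := j.pos
  set m : Fin n := ⟨n - 1, by omega⟩
  have hm : ¬ (m : ℕ) < n - 1 := lt_irrefl _
  have hmtail : m ∈ tail n k := by simpa [tail, m] using hkn
  have hrow : ∀ i ∈ (tail n k).erase m, 0 ≤ z i ∧ z i ≤ betaBound n k Δ i := by
    intro i hi
    have hi : (i : ℕ) < n - 1 := by
      have := (mem_erase.1 hi).1
      rw [Ne, Fin.ext_iff] at this
      omega
    exact mulVec_apply_of_lt z hi ▸ hz i
  have hS : 0 ≤ ∑ i ∈ (tail n k).erase m, z i := sum_nonneg fun i hi => (hrow i hi).1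
  have hSU : ∑ i ∈ (tail n k).erase m, z i + betaBound n k Δ m < Δ := calc
    _ ≤ ∑ i ∈ (tail n k).erase m, betaBound n k Δ i + betaBound n k Δ m := by
      gcongr with i hi; exact (hrow i hi).2
    _ = Δ - 1 := by rw [sum_erase_add _ _ hmtail, sum_betaBound_tail (by omega)]
    _ < Δ := by omega
  obtain ⟨hq, hS⟩ := Int.eq_zero_of_mul_sub_mem_Icc hS hSU (mulVec_apply_of_not_lt z hm ▸ hz m)
  by_cases hjm : j = m
  · rwa [← sum_erase_add _ _ hmtail, hS, zero_add, ← hjm] at hq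
  · exact (sum_eq_zero_iff_of_nonneg fun i hi => (hrow i hi).1).1 hS j (mem_erase.2 ⟨hjm, hj⟩)

theorem mulVec_mem_Icc_iff (hkn : k ≤ n - 1) (hΔ : 0 ≤ Δ - n + k) (z : Fin n → ℤ) :
    (∀ i, 0 ≤ (betaMatrix n k Δ *ᵥ z) i ∧ (betaMatrix n k Δ *ᵥ z) i ≤ betaBound n k Δ i) ↔
      z ∈ Set.Icc 0 (headOnes n k) := by
  constructor
  · intro hz
    have hzero : ∀ i : Fin n, k ≤ (i : ℕ) → z i = 0 := fun i hi =>
      eq_zero_of_mem_tail hkn hz (by simpa [tail] using hi)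
    have hhead : ∀ i : Fin n, (i : ℕ) < k → 0 ≤ z i ∧ z i ≤ 1 := fun i hi => by
      have h := hz i
      rw [mulVec_apply_of_lt z (by omega : (i : ℕ) < n - 1)] at h
      simpa [betaBound, hi.ne] using h
    refine ⟨fun i => ?_, fun i => ?_⟩ <;> by_cases hik : (i : ℕ) < k
    · exact (hhead i hik).1
    · simp [hzero i (Nat.not_lt.1 hik)]
    · simpa [headOnes, hik] using (hhead i hik).2
    · simp [headOnes, hik, hzero i (Nat.not_lt.1 hik)]
  · rintro ⟨hz0, hz1⟩ i
    have hzero : ∀ j ∈ tail n k, z j = 0 := fun j hj =>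
      le_antisymm (by simpa [headOnes, tail, Nat.not_lt.2 (mem_filter.1 hj).2] using hz1 j) (hz0 j)
    by_cases hi : (i : ℕ) < n - 1
    · rw [mulVec_apply_of_lt z hi]
      exact ⟨hz0 i, (hz1 i).trans (headOnes_le_betaBound hΔ i)⟩
    · rw [mulVec_apply_of_not_lt z hi, sum_eq_zero hzero,
        sum_eq_zero fun j hj => hzero j (mem_of_mem_erase hj)]
      simpa using betaBound_nonneg hΔ i

end BetaParallelepiped

open BetaParallelepiped

theorem stmt14_general (n k : ℕ) (hkn : k ≤ n - 1) (Δ : ℤ)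
    (hΔ : 1 ≤ Δ - n + k)
    (B : Matrix (Fin n) (Fin n) ℤ)
    (hB : B = fun (i j : Fin n) => if (i : ℕ) < n - 1 then (if i = j then 1 else 0)
      else (if (j : ℕ) < k then 0 else if (j : ℕ) = n - 1 then Δ else Δ - 1))
    (u : Fin n → ℤ) (hu : u = fun (i : Fin n) => if (i : ℕ) = k then Δ - n + k else 1) :
    Set.ncard {z : Fin n → ℤ | ∀ i, 0 ≤ B.mulVec z i ∧ B.mulVec z i ≤ u i} = 2 ^ k := by
  rw [show B = betaMatrix n k Δ from hB, show u = betaBound n k Δ from hu]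
  have hset : {z : Fin n → ℤ | ∀ i, _} = Set.Icc 0 (headOnes n k) :=
    Set.ext (mulVec_mem_Icc_iff hkn (by omega : 0 ≤ Δ - n + k))
  rw [hset, ← coe_Icc, Set.ncard_coe_finset, card_Icc_headOnes (by omega)]

/-- The parallelepiped `P(B) = {x : 0 ≤ Bx ≤ u}` from Section 5 contains exactly
`2^k` integer points. -/
theorem stmt14 (n k : ℕ) (hkn : k ≤ n - 1) (hn : 2 ≤ n) (Δ : ℤ)
    (hΔ : 1 ≤ Δ - n + k)
    (B : Matrix (Fin n) (Fin n) ℤ)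
    (hB : B = fun (i j : Fin n) => if (i : ℕ) < n - 1 then (if i = j then 1 else 0)
      else (if (j : ℕ) < k then 0 else if (j : ℕ) = n - 1 then Δ else Δ - 1))
    (u : Fin n → ℤ) (hu : u = fun (i : Fin n) => if (i : ℕ) = k then Δ - n + k else 1) :
    Set.ncard {z : Fin n → ℤ | ∀ i, 0 ≤ B.mulVec z i ∧ B.mulVec z i ≤ u i} = 2 ^ k :=
  stmt14_general n k hkn Δ hΔ B hB u hu
end

section
/- Let A ∈ ℤ^{m×n}, b ∈ ℤ^m with P(A,b) ∩ ℤⁿ = {0}, and suppose I ⊆ [m] indexes linearly independent rows of A whose kernel ker A_I (of dimension d) is the linear span of P_I(A,b) := P(A,b) ∩ ker A_I. Then there exist Â ∈ ℤ^{(m−n+d)×d}, b̂ ∈ ℤ^{m−n+d}, and a linear lattice isomorphism φ : ker A_I ∩ ℤⁿ → ℤ^d extending to a linear isomorphism ker A_I → ℝ^d, such that φ maps P_I(A,b) onto P(Â,b̂) and P(Â,b̂) ∩ ℤ^d = {0}. -/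
open Matrix

private lemma ratCast_mulVec_injective {k r : ℕ} (W : Matrix (Fin k) (Fin r) ℚ)
    (h : Function.Injective W.mulVec) :
    Function.Injective (W.map (Rat.cast : ℚ → ℝ)).mulVec := by
  have hker : LinearMap.ker (Matrix.toLin' W) = ⊥ := by
    rw [LinearMap.ker_eq_bot]
    intro x y hxy
    exact h (by simpa [Matrix.toLin'_apply] using hxy)
  obtain ⟨g, hg⟩ := LinearMap.exists_leftInverse_of_injective _ hker
  set B := LinearMap.toMatrix' g with hB
  have hBW : B * W = 1 := by
    have h2 := congrArg LinearMap.toMatrix' hg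
    rwa [LinearMap.toMatrix'_comp, LinearMap.toMatrix'_toLin', LinearMap.toMatrix'_id] at h2
  have hBWr : (B.map (Rat.cast : ℚ → ℝ)) * (W.map (Rat.cast : ℚ → ℝ)) = 1 := by
    have h3 : ((B * W).map ⇑(Rat.castHom ℝ)) = 1 := by
      rw [hBW]; exact Matrix.map_one _ (by simp) (by simp)
    rw [Matrix.map_mul] at h3
    simpa using h3
  intro x y hxy
  have hx : ∀ v : Fin r → ℝ,
      (B.map (Rat.cast : ℚ → ℝ)).mulVec ((W.map (Rat.cast : ℚ → ℝ)).mulVec v) = v := by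
    intro v; rw [mulVec_mulVec, hBWr, one_mulVec]
  rw [← hx x, ← hx y, hxy]

private lemma indep_rat_to_real {k r : ℕ} {v : Fin r → Fin k → ℚ}
    (h : LinearIndependent ℚ v) :
    LinearIndependent ℝ (fun i => fun j => ((v i j : ℝ))) := by
  classical
  set W : Matrix (Fin k) (Fin r) ℚ := (Matrix.of v)ᵀ with hW
  have h1 : Function.Injective W.mulVec := by
    rw [mulVec_injective_iff]
    simpa [hW] using h
  have h3 := mulVec_injective_iff.1 (ratCast_mulVec_injective W h1)
  convert h3 using 2
  · rfl
  · rfl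

private def intCastLM (k : ℕ) : (Fin k → ℤ) →ₗ[ℤ] (Fin k → ℚ) where
  toFun x := fun i => (x i : ℚ)
  map_add' x y := by funext i; simp
  map_smul' c x := by funext i; simp

private lemma intCastLM_inj (k : ℕ) : Function.Injective (intCastLM k) := by
  intro x y hxy
  funext i
  have h2 : ((x i : ℚ)) = ((y i : ℚ)) := congrFun hxy i
  exact_mod_cast h2

private def ratCastLM (k : ℕ) : (Fin k → ℚ) →ₗ[ℚ] (Fin k → ℝ) where
  toFun x := fun i => (x i : ℝ)
  map_add' x y := by funext i; simp
  map_smul' c x := by funext i; simp [Rat.smul_def]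

private lemma indep_int_to_real {k r : ℕ} {v : Fin r → Fin k → ℤ}
    (h : LinearIndependent ℤ v) :
    LinearIndependent ℝ (fun i => fun j => ((v i j : ℝ))) := by
  have h1 : LinearIndependent ℤ (fun i => (intCastLM k) (v i)) := by
    have := h.map' (intCastLM k) (LinearMap.ker_eq_bot.2 (intCastLM_inj k))
    exact this
  have h2 : LinearIndependent ℚ (fun i => fun j => ((v i j : ℚ))) := by
    have := h1.localization ℚ (nonZeroDivisors ℤ)
    exact this
  have h4 := indep_rat_to_real h2
  convert h4 using 2
  funext j; simp

private lemma cast_mulVec {p q : ℕ} {R : Type*} [CommRing R] (f : ℤ →+* R)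
    (M : Matrix (Fin p) (Fin q) ℤ) (x : Fin q → ℤ) :
    (M.map ⇑f).mulVec (fun t => f (x t)) = fun s => f (M.mulVec x s) := by
  funext s
  exact (RingHom.map_mulVec f M x s).symm

private lemma cast_mulVecQ {p q : ℕ} (M : Matrix (Fin p) (Fin q) ℤ) (x : Fin q → ℤ) :
    (M.map (Int.cast : ℤ → ℚ)).mulVec (fun t => ((x t : ℚ))) = fun s => ((M.mulVec x s : ℚ)) := by
  funext s
  exact (RingHom.map_mulVec (Int.castRingHom ℚ) M x s).symm

private lemma cast_mulVecR {p q : ℕ} (M : Matrix (Fin p) (Fin q) ℤ) (x : Fin q → ℤ) :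
    (M.map (Int.cast : ℤ → ℝ)).mulVec (fun t => ((x t : ℝ))) = fun s => ((M.mulVec x s : ℝ)) := by
  funext s
  exact (RingHom.map_mulVec (Int.castRingHom ℝ) M x s).symm

private lemma exists_int_rescale {k : ℕ} (u : Fin k → ℚ) :
    ∃ (N : ℤ) (w : Fin k → ℤ), N ≠ 0 ∧ ∀ i, ((w i : ℚ)) = (N : ℚ) * u i := by
  classical
  refine ⟨∏ j, ((u j).den : ℤ), fun i => (∏ j, ((u j).den : ℤ)) / (u i).den * (u i).num, ?_, ?_⟩
  · exact Finset.prod_ne_zero_iff.2 fun j _ => Int.natCast_ne_zero.2 (u j).den_nz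
  · intro i
    obtain ⟨M, hM⟩ : ((u i).den : ℤ) ∣ ∏ j, ((u j).den : ℤ) :=
      Finset.dvd_prod_of_mem _ (Finset.mem_univ i)
    have hden : ((u i).den : ℤ) ≠ 0 := Int.natCast_ne_zero.2 (u i).den_nz
    have hdiv : (∏ j, ((u j).den : ℤ)) / (u i).den = M := by
      rw [hM, Int.mul_ediv_cancel_left _ hden]
    have hden' : (((u i).den : ℤ) : ℚ) ≠ 0 := by exact_mod_cast hden
    have hnum : ((u i).num : ℚ) = u i * (((u i).den : ℤ) : ℚ) := by
      refine (div_eq_iff hden').1 ?_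
      push_cast
      exact Rat.num_div_den (u i)
    simp only [hdiv]
    rw [hM]
    push_cast [hnum]
    ring
/-- Dimension-reduction lemma (Lemma 3): the slice `P_I = P(A,b) ∩ ker A_I` can be
mapped by a lattice-preserving linear isomorphism onto a full-dimensional instance
`P(Â, b̂) ⊆ ℝᵈ` whose only integer point is the origin. -/
theorem stmt17 {m n d : ℕ} (hd : d ≤ n)
    (A : Matrix (Fin m) (Fin n) ℤ) (b : Fin m → ℤ)
    (P : Set (Fin n → ℝ))
    (hP : P = {x | ∀ i, (A.map (Int.cast : ℤ → ℝ)).mulVec x i ≤ (b i : ℝ)})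
    (h0 : (0 : Fin n → ℝ) ∈ P)
    (hint : ∀ x ∈ P, (∀ i, ∃ z : ℤ, x i = (z : ℝ)) → x = 0)
    (ι : Fin (n - d) → Fin m) (hι : Function.Injective ι)
    -- the rows of `A` indexed by `I` are linearly independent
    (hindep : LinearIndependent ℝ (fun s : Fin (n - d) => fun j => ((A (ι s) j : ℝ))))
    (K : Submodule ℝ (Fin n → ℝ))
    (hK : K = LinearMap.ker (((A.submatrix ι id).map (Int.cast : ℤ → ℝ)).mulVecLin))
    (hdim : Module.finrank ℝ K = d)
    -- the linear span of `P_I` is `ker A_I`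
    (hspan : Submodule.span ℝ (P ∩ (K : Set (Fin n → ℝ))) = K) :
    ∃ (Ah : Matrix (Fin (m - n + d)) (Fin d) ℤ) (bh : Fin (m - n + d) → ℤ)
      (φ : (Fin n → ℝ) →ₗ[ℝ] (Fin d → ℝ)),
      Set.InjOn φ (K : Set (Fin n → ℝ)) ∧
      φ '' (K : Set (Fin n → ℝ)) = Set.univ ∧
      φ '' ((K : Set (Fin n → ℝ)) ∩ {x | ∀ i, ∃ z : ℤ, x i = (z : ℝ)}) =
        {y : Fin d → ℝ | ∀ i, ∃ z : ℤ, y i = (z : ℝ)} ∧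
      φ '' (P ∩ (K : Set (Fin n → ℝ))) =
        {y | ∀ i, (Ah.map (Int.cast : ℤ → ℝ)).mulVec y i ≤ (bh i : ℝ)} ∧
      (∀ y : Fin d → ℝ, (∀ i, (Ah.map (Int.cast : ℤ → ℝ)).mulVec y i ≤ (bh i : ℝ)) →
        (∀ i, ∃ z : ℤ, y i = (z : ℝ)) → y = 0) := by
  classical
  -- matrices over the three rings
  set Mz : Matrix (Fin (n - d)) (Fin n) ℤ := A.submatrix ι id with hMz
  set Mq : Matrix (Fin (n - d)) (Fin n) ℚ := Mz.map (Int.cast : ℤ → ℚ) with hMq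
  set Mr : Matrix (Fin (n - d)) (Fin n) ℝ := Mz.map (Int.cast : ℤ → ℝ) with hMr
  have hMqr : Mq.map (Rat.cast : ℚ → ℝ) = Mr := by
    rw [hMq, hMr, Matrix.map_map]
    ext i j
    simp
  have hb0 : ∀ i, (0 : ℝ) ≤ (b i : ℝ) := by
    intro i
    rw [hP] at h0
    simpa using h0 i
  -- `K` over the rationals
  set Kq : Submodule ℚ (Fin n → ℚ) := LinearMap.ker Mq.mulVecLin with hKq
  have hKqdim : Module.finrank ℚ Kq = d := by
    set Rq : Submodule ℚ (Fin (n - d) → ℚ) := LinearMap.range Mq.mulVecLin with hRq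
    set Rr : Submodule ℝ (Fin (n - d) → ℝ) := LinearMap.range Mr.mulVecLin with hRr
    have bq : Module.Basis (Fin (Module.finrank ℚ Rq)) ℚ Rq := Module.finBasis ℚ Rq
    set cu : Fin (Module.finrank ℚ Rq) → (Fin (n - d) → ℝ) :=
      fun j => fun s => (((bq j : Fin (n - d) → ℚ)) s : ℝ) with hcu
    have hbq_amb : LinearIndependent ℚ (fun j => ((bq j : Fin (n - d) → ℚ))) := by
      have := bq.linearIndependent.map' Rq.subtype (Submodule.ker_subtype Rq)
      exact this
    have hcu_indep : LinearIndependent ℝ cu := indep_rat_to_real hbq_amb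
    have hcast_mem : ∀ u : Fin n → ℚ,
        (fun s => ((Mq.mulVec u s : ℚ) : ℝ)) = Mr.mulVec (fun t => ((u t : ℝ))) := by
      intro u
      funext s
      have h5 := RingHom.map_mulVec (Rat.castHom ℝ) Mq u s
      simpa [hMqr, Function.comp_def] using h5
    have hcu_mem : ∀ j, cu j ∈ Rr := by
      intro j
      obtain ⟨x, hx⟩ := (bq j).2
      refine ⟨fun t => ((x t : ℝ)), ?_⟩
      rw [Matrix.mulVecLin_apply, ← hcast_mem x]
      funext s
      rw [hcu]
      congr 1
      rw [← hx]
      simp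
    have hle1 : Module.finrank ℚ Rq ≤ Module.finrank ℝ Rr := by
      have hindepRr : LinearIndependent ℝ (fun j => (⟨cu j, hcu_mem j⟩ : Rr)) := by
        apply LinearIndependent.of_comp Rr.subtype
        exact hcu_indep
      have := (Module.finBasis ℝ Rr).card_le_card_of_linearIndependent hindepRr
      simpa using this
    have hle2 : Module.finrank ℝ Rr ≤ Module.finrank ℚ Rq := by
      have hsub : Rr ≤ Submodule.span ℝ (Set.range cu) := by
        rw [hRr, Matrix.range_mulVecLin]
        rw [Submodule.span_le]
        rintro - ⟨t, rfl⟩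
        have hmemq : Mqᵀ t ∈ Rq := by
          rw [hRq, Matrix.range_mulVecLin]
          exact Submodule.subset_span ⟨t, rfl⟩
        have hrepr := bq.sum_repr ⟨Mqᵀ t, hmemq⟩
        set c := bq.repr ⟨Mqᵀ t, hmemq⟩ with hc
        have hpt : ∀ s, (Mqᵀ t) s = ∑ j, c j * ((bq j : Fin (n - d) → ℚ)) s := by
          intro s
          have h7 := congrArg (fun (z : ↥Rq) => ((z : Fin (n - d) → ℚ)) s) hrepr
          simp only [Submodule.coe_sum, Submodule.coe_smul, Finset.sum_apply,
            Pi.smul_apply, smul_eq_mul] at h7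
          exact h7.symm
        have hcol : Mrᵀ t = ∑ j, ((c j : ℝ)) • cu j := by
          funext s
          have h8 : ((Mqᵀ t s : ℚ) : ℝ) = ∑ j, ((c j : ℝ)) * (((bq j : Fin (n - d) → ℚ)) s : ℝ) := by
            rw [hpt s]
            push_cast
            rfl
          rw [← hMqr]
          simpa [Matrix.transpose_apply, Matrix.map_apply, Finset.sum_apply,
            Pi.smul_apply, smul_eq_mul] using h8
        rw [show Mr.col t = Mrᵀ t from rfl, hcol]
        exact Submodule.sum_smul_mem _ _ (fun j _ => Submodule.subset_span ⟨j, rfl⟩)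
      calc Module.finrank ℝ Rr ≤ Module.finrank ℝ (Submodule.span ℝ (Set.range cu)) :=
            Submodule.finrank_mono hsub
        _ = Module.finrank ℚ Rq := by
            rw [finrank_span_eq_card hcu_indep, Fintype.card_fin]
    have heq : Module.finrank ℚ Rq = Module.finrank ℝ Rr := le_antisymm hle1 hle2
    have h1 := LinearMap.finrank_range_add_finrank_ker Mq.mulVecLin
    have h2 := LinearMap.finrank_range_add_finrank_ker Mr.mulVecLin
    rw [Module.finrank_pi, Fintype.card_fin] at h1 h2
    rw [← hKq] at h1
    rw [← hK] at h2
    rw [← hRq] at h1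
    rw [← hRr] at h2
    omega
  -- the integer kernel lattice
  set L : Submodule ℤ (Fin n → ℤ) := LinearMap.ker Mz.mulVecLin with hL
  obtain ⟨r, βL0⟩ := Submodule.basisOfPid (Pi.basisFun ℤ (Fin n)) L
  have hrd : r = d := by
    have hrle : r ≤ d := by
      have hamb : LinearIndependent ℤ (fun j => ((βL0 j : Fin n → ℤ))) :=
        βL0.linearIndependent.map' L.subtype (Submodule.ker_subtype L)
      have hq : LinearIndependent ℚ (fun j => (intCastLM n) ((βL0 j : Fin n → ℤ))) := by
        have h1 := hamb.map' (intCastLM n) (LinearMap.ker_eq_bot.2 (intCastLM_inj n))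
        exact h1.localization ℚ (nonZeroDivisors ℤ)
      have hmem : ∀ j, (intCastLM n) ((βL0 j : Fin n → ℤ)) ∈ Kq := by
        intro j
        have hj := LinearMap.mem_ker.1 (βL0 j).2
        rw [Matrix.mulVecLin_apply] at hj
        show Mq.mulVecLin ((intCastLM n) ((βL0 j : Fin n → ℤ))) = 0
        rw [Matrix.mulVecLin_apply]
        calc Mq *ᵥ ((intCastLM n) ((βL0 j : Fin n → ℤ)))
            = fun s => (((Mz.mulVec ((βL0 j : Fin n → ℤ))) s : ℤ) : ℚ) :=
              cast_mulVecQ Mz ((βL0 j : Fin n → ℤ))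
          _ = 0 := by
              funext s
              rw [congrFun hj s]
              simp
      have hKqindep : LinearIndependent ℚ
          (fun j => (⟨(intCastLM n) ((βL0 j : Fin n → ℤ)), hmem j⟩ : Kq)) := by
        apply LinearIndependent.of_comp Kq.subtype
        exact hq
      have := (Module.finBasis ℚ Kq).card_le_card_of_linearIndependent hKqindep
      simpa [hKqdim] using this
    have hdle : d ≤ r := by
      have bKq : Module.Basis (Fin (Module.finrank ℚ Kq)) ℚ Kq := Module.finBasis ℚ Kq
      set u : Fin (Module.finrank ℚ Kq) → (Fin n → ℚ) := fun j => ((bKq j : Fin n → ℚ)) with hu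
      have hu_indep : LinearIndependent ℚ u :=
        bKq.linearIndependent.map' Kq.subtype (Submodule.ker_subtype _)
      choose N wv hN hwv using fun j => exists_int_rescale (u j)
      have hwq : ∀ j, (fun t => ((wv j t : ℚ))) = (N j : ℚ) • u j := by
        intro j
        funext t
        rw [hwv j t]
        simp [Pi.smul_apply, Rat.smul_def]
      have hwvL : ∀ j, wv j ∈ L := by
        intro j
        have hker : Mq.mulVec (fun t => ((wv j t : ℚ))) = 0 := by
          rw [hwq j, Matrix.mulVec_smul]
          have h4 : Mq.mulVec (u j) = 0 := by
            have h5 : Mq.mulVecLin ((bKq j : Fin n → ℚ)) = 0 := LinearMap.mem_ker.1 (bKq j).2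
            rw [Matrix.mulVecLin_apply] at h5
            exact h5
          rw [h4, smul_zero]
        show wv j ∈ LinearMap.ker Mz.mulVecLin
        rw [LinearMap.mem_ker, Matrix.mulVecLin_apply]
        funext s
        have h6 := congrFun (cast_mulVecQ Mz (wv j)) s
        have h7 : ((Mz.mulVec (wv j) s : ℤ) : ℚ) = 0 := by
          rw [← h6]
          exact congrFun hker s
        exact_mod_cast h7
      have hsc_indep : LinearIndependent ℚ (fun j => (fun t => ((wv j t : ℚ)))) := by
        have h8 : (fun j => (fun t => ((wv j t : ℚ)))) =
            (fun j => (Units.mk0 ((N j : ℚ)) (by exact_mod_cast hN j)) • u j) := by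
          funext j
          rw [hwq j]
          rfl
        rw [h8]
        exact hu_indep.units_smul _
      have hZc : LinearIndependent ℤ (fun j => (fun t => ((wv j t : ℚ)))) := by
        apply hsc_indep.restrict_scalars (R := ℤ)
        intro a b hab
        have : ((a : ℚ)) = b := by simpa using hab
        exact_mod_cast this
      have hZ : LinearIndependent ℤ wv := by
        apply LinearIndependent.of_comp (intCastLM n)
        exact hZc
      have hLfam : LinearIndependent ℤ (fun j => (⟨wv j, hwvL j⟩ : L)) := by
        apply LinearIndependent.of_comp L.subtype
        exact hZ
      have := βL0.card_le_card_of_linearIndependent hLfam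
      simpa [hKqdim] using this
    omega
  set βL : Module.Basis (Fin d) ℤ L := βL0.reindex (finCongr hrd) with hβL
  -- the integer basis vectors, over ℤ and over ℝ
  set w : Fin d → (Fin n → ℤ) := fun j => (βL j : Fin n → ℤ) with hw
  have hwL : ∀ j, w j ∈ L := fun j => (βL j).2
  set V : Fin d → (Fin n → ℝ) := fun j => fun i => ((w j i : ℝ)) with hV
  have hMzw : ∀ j, Mz.mulVec (w j) = 0 := by
    intro j
    have h1 := LinearMap.mem_ker.1 (hwL j)
    rwa [Matrix.mulVecLin_apply] at h1
  have hVindep : LinearIndependent ℝ V := by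
    have hamb : LinearIndependent ℤ w :=
      βL.linearIndependent.map' L.subtype (Submodule.ker_subtype L)
    exact indep_int_to_real hamb
  have hVK : ∀ j, V j ∈ K := by
    intro j
    rw [hK, LinearMap.mem_ker, Matrix.mulVecLin_apply]
    calc Mr *ᵥ (V j) = fun s => ((Mz.mulVec (w j) s : ℤ) : ℝ) := cast_mulVecR Mz (w j)
      _ = 0 := by
          funext s
          rw [congrFun (hMzw j) s]
          simp
  have hVspan : Submodule.span ℝ (Set.range V) = K := by
    apply Submodule.eq_of_le_of_finrank_eq
    · rw [Submodule.span_le]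
      rintro - ⟨j, rfl⟩
      exact hVK j
    · rw [finrank_span_eq_card hVindep, Fintype.card_fin, hdim]
  -- basis of K built from V
  have hVindep' : LinearIndependent ℝ (fun j => (⟨V j, hVK j⟩ : K)) :=
    LinearIndependent.of_comp K.subtype hVindep
  have hVspan' : ⊤ ≤ Submodule.span ℝ (Set.range (fun j => (⟨V j, hVK j⟩ : K))) := by
    intro x _
    have hmap : Submodule.map K.subtype
        (Submodule.span ℝ (Set.range (fun j => (⟨V j, hVK j⟩ : K)))) =
        Submodule.span ℝ (Set.range V) := by
      rw [Submodule.map_span]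
      congr 1
      rw [← Set.range_comp]
      rfl
    have hx : (x : Fin n → ℝ) ∈ Submodule.map K.subtype
        (Submodule.span ℝ (Set.range (fun j => (⟨V j, hVK j⟩ : K)))) := by
      rw [hmap, hVspan]
      exact x.2
    obtain ⟨y, hy, hxy⟩ := hx
    have hyx : y = x := Subtype.ext hxy
    rwa [hyx] at hy
  set BK : Module.Basis (Fin d) ℝ K := Module.Basis.mk hVindep' hVspan' with hBK
  obtain ⟨π, hπ⟩ := LinearMap.exists_leftInverse_of_injective K.subtype (Submodule.ker_subtype K)
  set φ : (Fin n → ℝ) →ₗ[ℝ] (Fin d → ℝ) := (BK.equivFun : K ≃ₗ[ℝ] (Fin d → ℝ)).toLinearMap ∘ₗ π with hφ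
  have hπmem : ∀ (x : Fin n → ℝ) (hx : x ∈ K), π x = ⟨x, hx⟩ := by
    intro x hx
    have h1 := LinearMap.congr_fun hπ ⟨x, hx⟩
    simpa using h1
  have hφmem : ∀ (x : Fin n → ℝ) (hx : x ∈ K), φ x = BK.equivFun ⟨x, hx⟩ := by
    intro x hx
    rw [hφ]
    simp [hπmem x hx]
  set Wz : Matrix (Fin n) (Fin d) ℤ := Matrix.of (fun i j => w j i) with hWz
  set ψ : (Fin d → ℝ) →ₗ[ℝ] (Fin n → ℝ) := (Wz.map (Int.cast : ℤ → ℝ)).mulVecLin with hψ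
  have hψsum : ∀ y, ψ y = ∑ j, y j • V j := by
    intro y
    funext i
    rw [hψ]
    simp only [Matrix.mulVecLin_apply, Matrix.mulVec, dotProduct, Matrix.map_apply,
      Matrix.of_apply, Finset.sum_apply, Pi.smul_apply, smul_eq_mul, hV]
    exact Finset.sum_congr rfl fun j _ => mul_comm _ _
  have hψK : ∀ y, ψ y ∈ K := by
    intro y
    rw [hψsum]
    exact Submodule.sum_smul_mem _ _ (fun j _ => hVK j)
  have hψcoe : ∀ y, ((BK.equivFun.symm y : K) : Fin n → ℝ) = ψ y := by
    intro y
    rw [Module.Basis.equivFun_symm_apply, hψsum]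
    simp only [Submodule.coe_sum, Submodule.coe_smul]
    refine Finset.sum_congr rfl fun j _ => ?_
    congr 1
    rw [hBK, Module.Basis.mk_apply]
  have hφψ : ∀ y, φ (ψ y) = y := by
    intro y
    rw [hφmem _ (hψK y)]
    have h1 : (⟨ψ y, hψK y⟩ : K) = BK.equivFun.symm y := Subtype.ext (hψcoe y).symm
    rw [h1]
    exact BK.equivFun.apply_symm_apply y
  have hψφ : ∀ x, x ∈ K → ψ (φ x) = x := by
    intro x hx
    rw [hφmem x hx, ← hψcoe, BK.equivFun.symm_apply_apply]
  -- integer points of K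
  have hψint : ∀ (c : Fin d → ℤ) (i : Fin n), ∃ z : ℤ, ψ (fun j => ((c j : ℝ))) i = (z : ℝ) := by
    intro c i
    refine ⟨∑ j, c j * w j i, ?_⟩
    rw [hψsum]
    simp only [Finset.sum_apply, Pi.smul_apply, smul_eq_mul, hV]
    push_cast
    rfl
  have hintK : ∀ (x : Fin n → ℝ), x ∈ K → (∀ i, ∃ z : ℤ, x i = (z : ℝ)) →
      ∃ c : Fin d → ℤ, x = ψ (fun j => ((c j : ℝ))) := by
    intro x hx hxi
    choose zx hzx using hxi
    have hzxL : zx ∈ L := by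
      show zx ∈ LinearMap.ker Mz.mulVecLin
      rw [LinearMap.mem_ker, Matrix.mulVecLin_apply]
      have h1 : Mr.mulVec x = 0 := by
        have h2 := LinearMap.mem_ker.1 (hK ▸ hx)
        rwa [Matrix.mulVecLin_apply] at h2
      funext s
      have h2 := congrFun (cast_mulVecR Mz zx) s
      have h3 : (fun t => ((zx t : ℝ))) = x := by
        funext t
        rw [hzx t]
      rw [h3] at h2
      have h4 : ((Mz.mulVec zx s : ℤ) : ℝ) = 0 := by
        rw [← h2, h1]
        rfl
      exact_mod_cast h4
    set cz := βL.repr ⟨zx, hzxL⟩ with hcz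
    have hsum := βL.sum_repr ⟨zx, hzxL⟩
    refine ⟨fun j => cz j, ?_⟩
    have h4 : ∀ i, zx i = ∑ j, cz j * w j i := by
      intro i
      have h5 := congrArg (fun (z : L) => ((z : Fin n → ℤ)) i) hsum
      simp only [Submodule.coe_sum, Submodule.coe_smul, Finset.sum_apply, Pi.smul_apply,
        smul_eq_mul] at h5
      exact h5.symm
    funext i
    rw [hψsum]
    simp only [Finset.sum_apply, Pi.smul_apply, smul_eq_mul, hV]
    rw [hzx i, h4 i]
    push_cast
    rfl
  -- the reduced system
  have hndm : n - d ≤ m := by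
    have := Fintype.card_le_of_injective ι hι
    simpa using this
  have hcardc : Fintype.card {i : Fin m // i ∉ Set.range ι} = m - (n - d) := by
    have h1 : Fintype.card {i : Fin m // i ∈ Set.range ι} = n - d := by
      have h2 := Set.card_range_of_injective hι
      rw [Fintype.card_fin] at h2
      calc Fintype.card {i : Fin m // i ∈ Set.range ι}
          = Fintype.card ↥(Set.range ι) := Fintype.card_congr' rfl
        _ = n - d := h2
    have h3 := Fintype.card_subtype_compl (fun i : Fin m => i ∈ Set.range ι)
    rw [h1, Fintype.card_fin] at h3
    exact h3
  obtain ⟨e⟩ : Nonempty ({i : Fin m // i ∉ Set.range ι} ↪ Fin (m - n + d)) := by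
    apply Function.Embedding.nonempty_of_card_le
    rw [hcardc, Fintype.card_fin]
    omega
  set G : Matrix (Fin m) (Fin d) ℤ := A * Wz with hG
  have hGι : ∀ s, G (ι s) = 0 := by
    intro s
    funext j
    have h2 := congrFun (hMzw j) s
    simp only [Matrix.mulVec, dotProduct, hMz, Matrix.submatrix_apply, id_eq,
      Pi.zero_apply] at h2
    rw [hG]
    simp only [Matrix.mul_apply, Matrix.of_apply, hWz, Pi.zero_apply]
    exact h2
  set Ah : Matrix (Fin (m - n + d)) (Fin d) ℤ := Matrix.of (Function.extend e (fun i => G i.1) 0) with hAh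
  set bh : Fin (m - n + d) → ℤ := Function.extend e (fun i => b i.1) 0 with hbh
  have hAhe : ∀ i, Ah (e i) = G i.1 := by
    intro i
    show Function.extend (⇑e) (fun i => G i.1) 0 (e i) = G i.1
    rw [e.injective.extend_apply]
  have hbhe : ∀ i, bh (e i) = b i.1 := by
    intro i
    show Function.extend (⇑e) (fun i => b i.1) 0 (e i) = b i.1
    rw [e.injective.extend_apply]
  have hAhne : ∀ k, (¬∃ i, e i = k) → Ah k = 0 ∧ bh k = 0 := by
    intro k hk
    constructor
    · show Function.extend (⇑e) (fun i => G i.1) 0 k = 0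
      rw [Function.extend_apply' _ _ _ hk]
      rfl
    · show Function.extend (⇑e) (fun i => b i.1) 0 k = 0
      rw [Function.extend_apply' _ _ _ hk]
      rfl
  have hAhval : ∀ (y : Fin d → ℝ) (i : {i : Fin m // i ∉ Set.range ι}),
      (Ah.map (Int.cast : ℤ → ℝ)).mulVec y (e i) = (G.map (Int.cast : ℤ → ℝ)).mulVec y i.1 := by
    intro y i
    simp [Matrix.mulVec, dotProduct, Matrix.map_apply, hAhe i]
  have hAhval0 : ∀ (y : Fin d → ℝ) k, (¬∃ i, e i = k) →
      (Ah.map (Int.cast : ℤ → ℝ)).mulVec y k = 0 := by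
    intro y k hk
    simp [Matrix.mulVec, dotProduct, Matrix.map_apply, (hAhne k hk).1]
  have hGA : ∀ y, (G.map (Int.cast : ℤ → ℝ)).mulVec y = (A.map (Int.cast : ℤ → ℝ)).mulVec (ψ y) := by
    intro y
    have h1 : (G.map (Int.cast : ℤ → ℝ)) =
        (A.map (Int.cast : ℤ → ℝ)) * (Wz.map (Int.cast : ℤ → ℝ)) := by
      rw [hG]
      have h2 := Matrix.map_mul (L := A) (M := Wz) (f := Int.castRingHom ℝ)
      simpa using h2
    rw [hψ, Matrix.mulVecLin_apply, Matrix.mulVec_mulVec, h1]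
  have hGιr : ∀ (y : Fin d → ℝ) s, (G.map (Int.cast : ℤ → ℝ)).mulVec y (ι s) = 0 := by
    intro y s
    simp [Matrix.mulVec, dotProduct, Matrix.map_apply, hGι s]
  have hPiff : ∀ y : Fin d → ℝ,
      (∀ k, (Ah.map (Int.cast : ℤ → ℝ)).mulVec y k ≤ (bh k : ℝ)) ↔ ψ y ∈ P := by
    intro y
    constructor
    · intro hy
      rw [hP]
      intro i
      by_cases hi : i ∈ Set.range ι
      · obtain ⟨s, rfl⟩ := hi
        have h1 := hGιr y s
        rw [← congrFun (hGA y) (ι s)]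
        rw [h1]
        exact hb0 (ι s)
      · have h1 := hy (e ⟨i, hi⟩)
        rw [hAhval y ⟨i, hi⟩, hbhe ⟨i, hi⟩] at h1
        rw [← congrFun (hGA y) i]
        exact h1
    · intro hyP k
      by_cases hk : ∃ i, e i = k
      · obtain ⟨i, rfl⟩ := hk
        rw [hAhval y i, hbhe i, congrFun (hGA y) i.1]
        rw [hP] at hyP
        exact hyP i.1
      · rw [hAhval0 y k hk, (hAhne k hk).2]
        simp
  refine ⟨Ah, bh, φ, ?_, ?_, ?_, ?_, ?_⟩
  · intro x1 h1 x2 h2 h12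
    have h3 := congrArg ψ h12
    rwa [hψφ x1 h1, hψφ x2 h2] at h3
  · exact Set.eq_univ_of_forall fun y => ⟨ψ y, hψK y, hφψ y⟩
  · ext y
    constructor
    · rintro ⟨x, ⟨hxK, hxint⟩, rfl⟩
      obtain ⟨c, rfl⟩ := hintK x hxK hxint
      rw [hφψ]
      exact fun i => ⟨c i, rfl⟩
    · intro hy
      choose zy hzy using hy
      refine ⟨ψ y, ⟨hψK y, ?_⟩, hφψ y⟩
      have h1 : y = fun j => ((zy j : ℝ)) := funext hzy
      rw [h1]
      exact hψint zy
  · ext y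
    constructor
    · rintro ⟨x, ⟨hxP, hxK⟩, rfl⟩
      have h1 : ψ (φ x) = x := hψφ x hxK
      exact (hPiff (φ x)).2 (by rw [h1]; exact hxP)
    · intro hy
      exact ⟨ψ y, ⟨(hPiff y).1 hy, hψK y⟩, hφψ y⟩
  · intro y hy hyint
    have h1 : ψ y ∈ P := (hPiff y).1 hy
    choose zy hzy using hyint
    have hyz : y = fun j => ((zy j : ℝ)) := funext hzy
    have h2 : ψ y = 0 := by
      apply hint _ h1
      rw [hyz]
      exact hψint zy
    have h3 := congrArg φ h2
    rw [hφψ y] at h3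
    simpa using h3
end

section
/- Let A = TB ∈ ℤ^{m×n} with T totally unimodular and B ∈ ℤ^{n×n} invertible, |det B| = Δ, and let b ∈ ℤ^m. Then every vertex of the polyhedron P(A,b) = {x : Ax ≤ b} lies in the lattice Λ := B⁻¹ℤⁿ, i.e., Bv ∈ ℤⁿ for every vertex v of P(A,b). -/
open Matrix

/-- Every vertex of `P(A, b)` with `A = TB` strictly Δ-modular lies in `Λ = B⁻¹ℤⁿ`. -/
theorem stmt19 {m n : ℕ} (T : Matrix (Fin m) (Fin n) ℤ) (hT : T.IsTotallyUnimodular)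
    (B : Matrix (Fin n) (Fin n) ℤ) (Δ : ℕ) (hB : B.det.natAbs = Δ) (hΔ : 0 < Δ)
    (A : Matrix (Fin m) (Fin n) ℤ) (hA : A = T * B)
    (b : Fin m → ℤ)
    (P : Set (Fin n → ℝ))
    (hP : P = {x | ∀ i, (A.map (Int.cast : ℤ → ℝ)).mulVec x i ≤ (b i : ℝ)})
    (v : Fin n → ℝ) (hv : v ∈ P)
    -- `v` is a vertex: some `n` linearly independent rows are tight at `v`
    (ρ : Fin n → Fin m) (hρ : Function.Injective ρ)
    (hindep : IsUnit ((A.submatrix ρ id).map (Int.cast : ℤ → ℝ)).det)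
    (htight : ∀ s, (A.map (Int.cast : ℤ → ℝ)).mulVec v (ρ s) = (b (ρ s) : ℝ)) :
    ∀ i, ∃ z : ℤ, (B.map (Int.cast : ℤ → ℝ)).mulVec v i = (z : ℝ) := by
  set T' : Matrix (Fin n) (Fin n) ℤ := T.submatrix ρ id with hT'
  have mm : ∀ (M N : Matrix (Fin n) (Fin n) ℤ),
      (M * N).map (Int.cast : ℤ → ℝ) = M.map Int.cast * N.map Int.cast := by
    intro M N
    ext i j
    simp [Matrix.mul_apply]
  -- A.submatrix ρ id = T' * B
  have hsub : A.submatrix ρ id = T' * B := by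
    subst hA
    ext i j
    simp [Matrix.mul_apply, hT', Matrix.submatrix_apply]
  -- det T' ∈ {0, 1, -1}
  have hrange := hT n ρ id hρ Function.injective_id
  have hdetA : ((A.submatrix ρ id).map (Int.cast : ℤ → ℝ)).det
      = ((A.submatrix ρ id).det : ℝ) := by
    rw [show (A.submatrix ρ id).map (Int.cast : ℤ → ℝ)
        = (Int.castRingHom ℝ).mapMatrix (A.submatrix ρ id) from rfl, ← RingHom.map_det]
    rfl
  have hdet_ne : T'.det ≠ 0 := by
    intro h0
    rw [hdetA, hsub, Matrix.det_mul, h0, zero_mul] at hindep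
    simp at hindep
  have hunit : IsUnit T'.det := by
    obtain ⟨s, hs⟩ := hrange
    cases s with
    | zero => exact absurd hs.symm hdet_ne
    | pos => exact hs ▸ isUnit_one
    | neg => rw [← hs]; exact isUnit_one.neg
  haveI : Invertible T' := T'.invertibleOfIsUnitDet hunit
  set w : Fin n → ℝ := (B.map (Int.cast : ℤ → ℝ)).mulVec v with hw
  have key : (T'.map (Int.cast : ℤ → ℝ)).mulVec w = fun s => ((b (ρ s) : ℤ) : ℝ) := by
    funext s
    have h := htight s
    have e : ((A.submatrix ρ id).map (Int.cast : ℤ → ℝ)).mulVec v s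
        = (A.map (Int.cast : ℤ → ℝ)).mulVec v (ρ s) := by
      simp [Matrix.mulVec, dotProduct, Matrix.submatrix_apply]
    rw [hw, Matrix.mulVec_mulVec, ← mm, ← hsub, e]
    exact h
  have hwi : w = fun i => (((⅟T').mulVec fun s => b (ρ s)) i : ℝ) := by
    have h1 : ((⅟T').map (Int.cast : ℤ → ℝ)).mulVec
        ((T'.map (Int.cast : ℤ → ℝ)).mulVec w) = w := by
      rw [Matrix.mulVec_mulVec, ← mm, invOf_mul_self]
      simp
    rw [key] at h1
    rw [← h1]
    funext i
    simp [Matrix.mulVec, dotProduct]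
  intro i
  exact ⟨(⅟T').mulVec (fun s => b (ρ s)) i, congrFun hwi i⟩
end
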